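/- arXiv:2108.03811 — 10 statements merged into one kernel-verified Lean document; each statement's English description precedes it below -/
import Mathlib

section
/- Let N ≥ 2 and let η_1, …, η_{2N} be elements of an associative unital ℂ-algebra, indexed cyclically mod 2N, satisfying η_j η_{j+1} = −η_{j+1} η_j for all j, η_j η_k = η_k η_j whenever k ≢ j±1 (mod 2N), and η_j² = 1 for all j. Define A₀ = Σ_{j=1}^{N} η_{2j−1} and A₁ = Σ_{j=1}^{N} η_{2j}. Then A₀ and A₁ satisfy the Dolan–Grady condition with constant C = 16, i.e. [A₀,[A₀,[A₀,A₁]]] = 16·[A₀,A₁] and [A₁,[A₁,[A₁,A₀]]] = 16·[A₁,A₀]. -/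
/-!
`A₀` and `A₁` are the sums of the η's of odd and of even index; the two relations are the same
statement with the parities exchanged. Let `S` be the sum over one parity class: its summands
pairwise commute. An η_m of the other parity anticommutes with exactly the two summands η_{m-1},
η_{m+1} of `S` (distinct because `N ≥ 2`) and commutes with the rest, so `[S, η_m] = c η_m` with
`c = 2 (η_{m-1} + η_{m+1})`, and `c` commutes with `S`. Hence `[S, [S, [S, η_m]]] = c³ η_m`, and
`c³ = 16 c` because η_{m±1} are commuting involutions. Summing over `m` gives the claim.
-/

section Ring

variable {A : Type*} [Ring A]

-- makes `sum_lie` and `lie_sum` available for the commutator bracket `⁅a, b⁆ = a * b - b * a`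
attribute [local instance] LieRing.ofAssociativeRing

theorem lie_eq_two_mul_of_mul_eq_neg {a b : A} (h : a * b = -(b * a)) :
    ⁅a, b⁆ = 2 * (a * b) := by
  rw [Ring.lie_def, two_mul, sub_eq_add_neg, ← h]

theorem Commute.lie_mul_left {s c : A} (h : Commute s c) (y : A) :
    ⁅s, c * y⁆ = c * ⁅s, y⁆ := by
  rw [Ring.lie_def, Ring.lie_def, mul_sub, ← mul_assoc, h.eq, mul_assoc, mul_assoc]

theorem lie_lie_lie_eq_pow_three_mul {s c b : A} (hc : Commute s c) (h : ⁅s, b⁆ = c * b) :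
    ⁅s, ⁅s, ⁅s, b⁆⁆⁆ = c ^ 3 * b := by
  rw [h, hc.lie_mul_left, h, hc.lie_mul_left, hc.lie_mul_left, h, pow_three, mul_assoc, mul_assoc]

theorem Commute.two_mul_add_pow_three {a a' : A} (h : Commute a a') (ha : a ^ 2 = 1)
    (ha' : a' ^ 2 = 1) : (2 * (a + a')) ^ 3 = 16 * (2 * (a + a')) := by
  have hsq : (a + a') ^ 2 = 2 + 2 * (a * a') := by
    rw [h.add_sq, ha, ha', mul_assoc, add_right_comm, one_add_one_eq_two]
  have hprod : a * a' * (a + a') = a + a' := by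
    rw [mul_add, mul_assoc, ← h.eq, ← mul_assoc, ← sq, ha, mul_assoc, ← sq, ha', one_mul,
      mul_one, add_comm]
  have hcube : (a + a') ^ 3 = 4 * (a + a') := by
    rw [pow_succ, hsq, add_mul, mul_assoc, hprod]
    noncomm_ring
  rw [(Commute.ofNat_left 2 _).mul_pow, hcube]
  noncomm_ring

theorem lie_lie_lie_sum_eq_sixteen_mul_lie {ι : Type*} {a : ι → A} {s : Finset ι}
    (hcomm : ∀ i ∈ s, ∀ k ∈ s, Commute (a i) (a k)) (hsq : ∀ i ∈ s, a i ^ 2 = 1)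
    {p q : ι} (hp : p ∈ s) (hq : q ∈ s) (hpq : p ≠ q) {b : A}
    (hbp : a p * b = -(b * a p)) (hbq : a q * b = -(b * a q))
    (hb : ∀ i ∈ s, i ≠ p → i ≠ q → Commute (a i) b) :
    ⁅∑ i ∈ s, a i, ⁅∑ i ∈ s, a i, ⁅∑ i ∈ s, a i, b⁆⁆⁆ = 16 * ⁅∑ i ∈ s, a i, b⁆ := by
  set c := 2 * (a p + a q)
  have hlie : ⁅∑ i ∈ s, a i, b⁆ = c * b := by
    rw [sum_lie, Finset.sum_eq_add_of_mem p q hp hq hpq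
        (fun i hi hne => (hb i hi hne.1 hne.2).lie_eq),
      lie_eq_two_mul_of_mul_eq_neg hbp, lie_eq_two_mul_of_mul_eq_neg hbq, ← mul_add, ← add_mul,
      mul_assoc]
  have hc : Commute (∑ i ∈ s, a i) c :=
    Commute.sum_left _ _ _ fun i hi =>
      (Commute.ofNat_right _ 2).mul_right ((hcomm i hi p hp).add_right (hcomm i hi q hq))
  rw [lie_lie_lie_eq_pow_three_mul hc hlie,
    (hcomm p hp q hq).two_mul_add_pow_three (hsq p hp) (hsq q hq), hlie, mul_assoc]

end Ring

theorem ZMod.two_ne_zero_of_three_le {n : ℕ} (hn : 3 ≤ n) : (2 : ZMod n) ≠ 0 := by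
  intro h
  have := Nat.le_of_dvd two_pos ((ZMod.natCast_eq_zero_iff 2 n).mp (by exact_mod_cast h))
  omega

def parity (N : ℕ) : ZMod (2 * N) →+* ZMod 2 := ZMod.castHom (dvd_mul_right 2 N) (ZMod 2)

section Parity

variable {N : ℕ}

theorem parity_add_one (k : ZMod (2 * N)) : parity N (k + 1) = parity N k + 1 := by
  rw [map_add, map_one]

theorem parity_sub_one (k : ZMod (2 * N)) : parity N (k - 1) = parity N k + 1 := by
  rw [map_sub, map_one, CharTwo.sub_eq_add]

theorem parity_two : parity N 2 = 0 := by
  rw [map_ofNat]; rfl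

theorem sum_range_two_mul_add [NeZero N] {M : Type*} [AddCommMonoid M] (f : ZMod (2 * N) → M)
    (c : ZMod (2 * N)) :
    ∑ j ∈ Finset.range N, f (2 * j + c) = ∑ k with parity N k = parity N c, f k := by
  refine Finset.sum_nbij' (fun j => 2 * j + c) (fun k => (k - c).val / 2) ?_ ?_ ?_ ?_
    fun _ _ => rfl
  · intro j _
    simp [parity_two]
  · intro k _
    have := ZMod.val_lt (k - c)
    exact Finset.mem_range.mpr (by omega)
  · intro j hj
    have hj : j < N := by simpa using hj
    have hcast : 2 * (j : ZMod (2 * N)) = ((2 * j : ℕ) : ZMod (2 * N)) := by norm_cast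
    rw [add_sub_cancel_right, hcast, ZMod.val_cast_of_lt (by omega)]
    omega
  · intro k hk
    have heven : parity N (k - c) = 0 := by simpa [sub_eq_zero] using hk
    rw [parity, ZMod.castHom_apply, ZMod.cast_eq_val, ZMod.natCast_eq_zero_iff] at heven
    have hcast : 2 * (((k - c).val / 2 : ℕ) : ZMod (2 * N)) =
        ((2 * ((k - c).val / 2) : ℕ) : ZMod (2 * N)) := by norm_cast
    rw [hcast, Nat.mul_div_cancel' heven, ZMod.natCast_zmod_val, sub_add_cancel]

end Parity

section Eta

variable {N : ℕ} [NeZero N] {A : Type*} [Ring A]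

def paritySum (η : ZMod (2 * N) → A) (r : ZMod 2) : A := ∑ k with parity N k = r, η k

attribute [local instance] LieRing.ofAssociativeRing

theorem lie_lie_lie_paritySum (hN : 2 ≤ N) {η : ZMod (2 * N) → A}
    (hanti : ∀ j : ZMod (2 * N), η j * η (j + 1) = -(η (j + 1) * η j))
    (hcomm : ∀ j k : ZMod (2 * N), k ≠ j + 1 → k ≠ j - 1 → η j * η k = η k * η j)
    (hsq : ∀ j : ZMod (2 * N), η j ^ 2 = 1) (r : ZMod 2) :
    ⁅paritySum η r, ⁅paritySum η r, ⁅paritySum η r, paritySum η (r + 1)⁆⁆⁆ =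
      16 * ⁅paritySum η r, paritySum η (r + 1)⁆ := by
  have hcomm_of_parity_eq : ∀ j k, parity N j = parity N k → Commute (η j) (η k) := by
    intro j k h
    refine hcomm j k (fun hk => ?_) (fun hk => ?_) <;> subst hk
    · simp [parity_add_one] at h
    · simp [parity_sub_one] at h
  have hr : r + 1 + 1 = r := by rw [add_assoc, CharTwo.add_self_eq_zero, add_zero]
  rw [paritySum, paritySum, lie_sum, lie_sum, lie_sum, Finset.mul_sum]
  refine Finset.sum_congr rfl fun m hm => ?_
  have hm : parity N m = r + 1 := (Finset.mem_filter.mp hm).2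
  refine lie_lie_lie_sum_eq_sixteen_mul_lie (p := m - 1) (q := m + 1)
    (fun i hi k hk => hcomm_of_parity_eq i k ?_) (fun i _ => hsq i) ?_ ?_ ?_ ?_ ?_ ?_
  · exact (Finset.mem_filter.mp hi).2.trans (Finset.mem_filter.mp hk).2.symm
  · simp [parity_sub_one, hm, hr]
  · simp [parity_add_one, hm, hr]
  · intro h
    exact ZMod.two_ne_zero_of_three_le (by omega : 3 ≤ 2 * N) (by linear_combination -h)
  · simpa using hanti (m - 1)
  · rw [hanti m, neg_neg]
  · intro i _ hi₁ hi₂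
    exact (hcomm m i hi₂ hi₁).symm

end Eta

/-- Theorem 1 of the paper.
Let `N ≥ 2` and let `η_1, …, η_{2N}` be elements of an associative unital `ℂ`-algebra,
indexed cyclically mod `2N`, satisfying `η_j η_{j+1} = −η_{j+1} η_j`,
`η_j η_k = η_k η_j` whenever `k ≢ j ± 1 (mod 2N)`, and `η_j² = 1`.
With `A₀ = Σ_{j=1}^{N} η_{2j−1}` and `A₁ = Σ_{j=1}^{N} η_{2j}`, the pair `(A₀, A₁)`
satisfies the Dolan–Grady condition with constant `C = 16`. -/
theorem dolan_grady_of_eta_relations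
    (N : ℕ) (hN : 2 ≤ N) (A : Type*) [Ring A] [Algebra ℂ A]
    (η : ZMod (2 * N) → A)
    (hanti : ∀ j : ZMod (2 * N), η j * η (j + 1) = -(η (j + 1) * η j))
    (hcomm : ∀ j k : ZMod (2 * N), k ≠ j + 1 → k ≠ j - 1 → η j * η k = η k * η j)
    (hsq : ∀ j : ZMod (2 * N), η j ^ 2 = 1)
    (A₀ A₁ : A)
    (hA₀ : A₀ = ∑ j ∈ Finset.range N, η (2 * (j : ZMod (2 * N)) + 1))
    (hA₁ : A₁ = ∑ j ∈ Finset.range N, η (2 * (j : ZMod (2 * N)) + 2)) :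
    ⁅A₀, ⁅A₀, ⁅A₀, A₁⁆⁆⁆ = (16 : ℂ) • ⁅A₀, A₁⁆ ∧
    ⁅A₁, ⁅A₁, ⁅A₁, A₀⁆⁆⁆ = (16 : ℂ) • ⁅A₁, A₀⁆ := by
  have : NeZero N := ⟨by omega⟩
  have hA₀ : A₀ = paritySum η 1 := by rw [hA₀, sum_range_two_mul_add, map_one]; rfl
  have hA₁ : A₁ = paritySum η 0 := by rw [hA₁, sum_range_two_mul_add, parity_two]; rfl
  have key := lie_lie_lie_paritySum hN hanti hcomm hsq
  simp only [ofNat_smul_eq_nsmul, nsmul_eq_mul, Nat.cast_ofNat, hA₀, hA₁]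
  exact ⟨key 1, key 0⟩
end

section
/- Let N ≥ 2 and let η_1, …, η_{2N} be elements of an associative unital ℂ-algebra, indexed cyclically mod 2N, satisfying η_j η_{j+1} = −η_{j+1} η_j for all j, η_j η_k = η_k η_j whenever k ≢ j±1 (mod 2N), and η_j² = 1 for all j. With A_l = Σ_{j=1}^{N} η_{2j} η_{2j+1} ⋯ η_{2j+2l−2} (l ≥ 1), A₀ = Σ_{j=1}^{N} η_{2j−1}, A_{−l} = Σ_{j=1}^{N} η_{2j−2l−1} ⋯ η_{2j−1}, G₀ = 0 and G_l = (1/2) Σ_{j=1}^{N} (η_{2j} η_{2j+1} ⋯ η_{2j+2l−1} − η_{2j−1} η_{2j} ⋯ η_{2j+2l−2}) for l ≥ 1, the closure relations A_{l+2N} = A_l and G_{l+2N} = G_l hold for all l ≥ 0. -/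
section ChainAux

variable {N : ℕ} {A : Type*} [Ring A] (η : ZMod (2 * N) → A)

/-- Ordered product of `m` consecutive `η`'s starting at index `a`
(defined exactly as the expressions in the main statement elaborate). -/
def chainEta (a : ZMod (2 * N)) (m : ℕ) : A :=
  ((List.range m).map (fun i => η (a + (i : ZMod (2 * N))))).prod

lemma chainEta_eq (a : ZMod (2 * N)) (m : ℕ) :
    chainEta η a m
      = (List.map (fun i : ℕ => η (a + ((i : ℕ) : ZMod (2 * N)))) (List.range m)).prod := by
  unfold chainEta
  congr 1
  induction (List.range m) with
  | nil => rfl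
  | cons x xs ih => simpa using ih

lemma chainEta_succ (a : ZMod (2 * N)) (m : ℕ) :
    chainEta η a (m + 1) = chainEta η a m * η (a + (m : ZMod (2 * N))) := by
  rw [chainEta_eq, chainEta_eq, List.range_succ, List.map_append, List.prod_append]
  simp

lemma chainEta_cons (a : ZMod (2 * N)) (m : ℕ) :
    chainEta η a (m + 1) = η a * chainEta η (a + 1) m := by
  rw [chainEta_eq, chainEta_eq, List.range_succ_eq_map, List.map_cons, List.prod_cons,
    List.map_map]
  congr 1
  · norm_num
  · refine congrArg List.prod (List.map_congr_left fun i _ => ?_)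
    show η (a + ((Nat.succ i : ℕ) : ZMod (2 * N))) = η (a + 1 + (i : ZMod (2 * N)))
    congr 1
    push_cast
    ring

lemma chainEta_add (a : ZMod (2 * N)) (m n : ℕ) :
    chainEta η a (m + n) = chainEta η a m * chainEta η (a + (m : ZMod (2 * N))) n := by
  rw [chainEta_eq, chainEta_eq, chainEta_eq, List.range_add, List.map_append,
    List.prod_append, List.map_map]
  congr 1
  congr 1
  exact List.map_congr_left fun i _ => by
    show η (a + ((m + i : ℕ) : ZMod (2 * N))) = η (a + (m : ZMod (2 * N)) + (i : ZMod (2 * N)))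
    congr 1
    push_cast
    ring

lemma chainEta_one (a : ZMod (2 * N)) : chainEta η a 1 = η a := by
  rw [chainEta_eq]
  norm_num [List.range_succ]

lemma natcast_zmod_ne_zero {m : ℕ} (h1 : 0 < m) (h2 : m < 2 * N) :
    (m : ZMod (2 * N)) ≠ 0 := by
  intro h
  rw [ZMod.natCast_eq_zero_iff] at h
  exact absurd (Nat.le_of_dvd h1 h) (by omega)

lemma eta_mul_self (hsq : ∀ j : ZMod (2 * N), η j ^ 2 = 1) (a : ZMod (2 * N)) :
    η a * η a = 1 := by
  have := hsq a; rwa [pow_two] at this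

lemma eta_comm_far
    (hcomm : ∀ j k : ZMod (2 * N), k ≠ j + 1 → k ≠ j - 1 → η j * η k = η k * η j)
    (a : ZMod (2 * N)) (c : ℕ) (h1 : 2 ≤ c) (h2 : c ≤ 2 * N - 2) :
    η a * η (a + (c : ZMod (2 * N))) = η (a + (c : ZMod (2 * N))) * η a := by
  have hN : 2 ≤ N := by omega
  refine hcomm _ _ ?_ ?_
  · intro h
    have hc : (c : ZMod (2 * N)) = 1 := add_left_cancel h
    have h0 : ((c - 1 : ℕ) : ZMod (2 * N)) = 0 := by
      rw [Nat.cast_sub (by omega : 1 ≤ c), hc]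
      simp
    exact natcast_zmod_ne_zero (by omega) (by omega) h0
  · intro h
    have hc : (c : ZMod (2 * N)) = -1 := by
      have h' : a + (c : ZMod (2 * N)) = a + (-1) := by rw [h]; ring
      exact add_left_cancel h'
    have h0 : ((c + 1 : ℕ) : ZMod (2 * N)) = 0 := by
      push_cast
      rw [hc]; ring
    exact natcast_zmod_ne_zero (by omega) (by omega) h0

lemma eta_anti_pred
    (hanti : ∀ j : ZMod (2 * N), η j * η (j + 1) = -(η (j + 1) * η j))
    (a : ZMod (2 * N)) : η a * η (a - 1) = -(η (a - 1) * η a) := by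
  have h := hanti (a - 1)
  rw [sub_add_cancel] at h
  rw [h, neg_neg]

/-- `η a` anticommutes with the chain `η_{a+1} ⋯ η_{a+m}` when `1 ≤ m ≤ 2N-2`. -/
lemma eta_chain_anticomm
    (hanti : ∀ j : ZMod (2 * N), η j * η (j + 1) = -(η (j + 1) * η j))
    (hcomm : ∀ j k : ZMod (2 * N), k ≠ j + 1 → k ≠ j - 1 → η j * η k = η k * η j) :
    ∀ m : ℕ, 1 ≤ m → m ≤ 2 * N - 2 → ∀ a : ZMod (2 * N),
      η a * chainEta η (a + 1) m = -(chainEta η (a + 1) m * η a) := by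
  intro m
  induction m with
  | zero => omega
  | succ m ih =>
    intro hm1 hm2 a
    rcases Nat.eq_zero_or_pos m with hm0 | hmpos
    · subst hm0
      rw [chainEta_one]
      exact hanti a
    · rw [chainEta_succ]
      set C := chainEta η (a + 1) m with hC
      have h1 : η a * C = -(C * η a) := ih hmpos (by omega) a
      have h2 : η a * η (a + 1 + (m : ZMod (2 * N))) =
          η (a + 1 + (m : ZMod (2 * N))) * η a := by
        have h := eta_comm_far η hcomm a (m + 1) (by omega) (by omega)
        have he : a + ((m + 1 : ℕ) : ZMod (2 * N)) = a + 1 + (m : ZMod (2 * N)) := by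
          push_cast; ring
        rwa [he] at h
      rw [← mul_assoc, h1, neg_mul, mul_assoc, h2, ← mul_assoc]

/-- Square of a chain of length `1 ≤ m ≤ 2N-1`. -/
lemma chain_sq
    (hanti : ∀ j : ZMod (2 * N), η j * η (j + 1) = -(η (j + 1) * η j))
    (hcomm : ∀ j k : ZMod (2 * N), k ≠ j + 1 → k ≠ j - 1 → η j * η k = η k * η j)
    (hsq : ∀ j : ZMod (2 * N), η j ^ 2 = 1) :
    ∀ m : ℕ, 1 ≤ m → m ≤ 2 * N - 1 → ∀ a : ZMod (2 * N),
      chainEta η a m * chainEta η a m = (-1 : A) ^ (m - 1) := by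
  intro m
  induction m with
  | zero => omega
  | succ m ih =>
    intro hm1 hm2 a
    rcases Nat.eq_zero_or_pos m with hm0 | hmpos
    · subst hm0
      rw [chainEta_one]
      simpa using eta_mul_self η hsq a
    · rw [chainEta_cons]
      set C := chainEta η (a + 1) m with hC
      have h1 : η a * C = -(C * η a) :=
        eta_chain_anticomm η hanti hcomm m hmpos (by omega) a
      have h1' : C * η a = -(η a * C) := by rw [h1, neg_neg]
      have hCC : C * C = (-1 : A) ^ (m - 1) := ih hmpos (by omega) (a + 1)
      have hpow : (-1 : A) ^ (m + 1 - 1) = -((-1 : A) ^ (m - 1)) := by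
        conv_lhs => rw [show m + 1 - 1 = (m - 1) + 1 by omega]
        rw [pow_succ, mul_neg_one]
      calc η a * C * (η a * C)
          = η a * ((C * η a) * C) := by simp only [mul_assoc]
        _ = η a * (-(η a * C) * C) := by rw [h1']
        _ = -(η a * η a * (C * C)) := by simp only [neg_mul, mul_neg, mul_assoc]
        _ = -((1 : A) * (C * C)) := by rw [eta_mul_self η hsq]
        _ = (-1 : A) ^ (m + 1 - 1) := by rw [one_mul, hCC, hpow]

/-- `η s` commutes with the rest of a full cycle. -/
lemma eta_cycle_comm
    (hanti : ∀ j : ZMod (2 * N), η j * η (j + 1) = -(η (j + 1) * η j))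
    (hcomm : ∀ j k : ZMod (2 * N), k ≠ j + 1 → k ≠ j - 1 → η j * η k = η k * η j)
    (hN : 2 ≤ N) (s : ZMod (2 * N)) :
    η s * chainEta η (s + 1) (2 * N - 1) = chainEta η (s + 1) (2 * N - 1) * η s := by
  have e : chainEta η (s + 1) ((2 * N - 2) + 1)
      = chainEta η (s + 1) (2 * N - 2) * η (s + 1 + ((2 * N - 2 : ℕ) : ZMod (2 * N))) :=
    chainEta_succ η _ _
  have hcast : ((2 * N - 2 : ℕ) : ZMod (2 * N)) = -2 := by
    have h0 : (((2 * N - 2) + 2 : ℕ) : ZMod (2 * N)) = 0 := by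
      rw [show (2 * N - 2) + 2 = 2 * N by omega]
      exact ZMod.natCast_self _
    push_cast at h0
    linear_combination h0
  have hidx : s + 1 + ((2 * N - 2 : ℕ) : ZMod (2 * N)) = s - 1 := by
    rw [hcast]; ring
  rw [hidx] at e
  rw [show 2 * N - 1 = (2 * N - 2) + 1 by omega, e]
  set C := chainEta η (s + 1) (2 * N - 2) with hC
  have h1 : η s * C = -(C * η s) :=
    eta_chain_anticomm η hanti hcomm (2 * N - 2) (by omega) (by omega) s
  have h2 : η s * η (s - 1) = -(η (s - 1) * η s) := eta_anti_pred η hanti s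
  rw [← mul_assoc, h1, neg_mul, mul_assoc, h2, mul_neg, neg_neg, ← mul_assoc]

/-- The full-cycle product squares to 1. -/
lemma cycle_sq
    (hanti : ∀ j : ZMod (2 * N), η j * η (j + 1) = -(η (j + 1) * η j))
    (hcomm : ∀ j k : ZMod (2 * N), k ≠ j + 1 → k ≠ j - 1 → η j * η k = η k * η j)
    (hsq : ∀ j : ZMod (2 * N), η j ^ 2 = 1)
    (hN : 2 ≤ N) (s : ZMod (2 * N)) :
    chainEta η s (2 * N) * chainEta η s (2 * N) = 1 := by
  have e : chainEta η s (2 * N) = η s * chainEta η (s + 1) (2 * N - 1) := by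
    have h := chainEta_cons η s (2 * N - 1)
    rwa [show (2 * N - 1) + 1 = 2 * N by omega] at h
  set C := chainEta η (s + 1) (2 * N - 1) with hC
  have hc : η s * C = C * η s := eta_cycle_comm η hanti hcomm hN s
  have hCC : C * C = (-1 : A) ^ (2 * N - 1 - 1) :=
    chain_sq η hanti hcomm hsq (2 * N - 1) (by omega) (le_refl _) (s + 1)
  rw [e]
  calc η s * C * (η s * C)
      = η s * (C * η s) * C := by simp only [mul_assoc]
    _ = η s * (η s * C) * C := by rw [← hc]
    _ = (η s * η s) * (C * C) := by simp only [mul_assoc]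
    _ = (1 : A) * ((-1 : A) ^ (2 * N - 1 - 1)) := by
        rw [eta_mul_self η hsq, hCC]
    _ = 1 := by
        rw [one_mul, show 2 * N - 1 - 1 = 2 * (N - 1) by omega, pow_mul, neg_one_sq,
          one_pow]

/-- The double-cycle product (length `4N`) equals 1. -/
lemma chain_two_cycles
    (hanti : ∀ j : ZMod (2 * N), η j * η (j + 1) = -(η (j + 1) * η j))
    (hcomm : ∀ j k : ZMod (2 * N), k ≠ j + 1 → k ≠ j - 1 → η j * η k = η k * η j)
    (hsq : ∀ j : ZMod (2 * N), η j ^ 2 = 1)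
    (hN : 2 ≤ N) (s : ZMod (2 * N)) :
    chainEta η s (4 * N) = 1 := by
  have e := chainEta_add η s (2 * N) (2 * N)
  rw [show 2 * N + 2 * N = 4 * N by omega, ZMod.natCast_self, add_zero] at e
  rw [e]
  exact cycle_sq η hanti hcomm hsq hN s

/-- The product of `4N - 1` consecutive `η`'s starting at `s` is `η (s-1)`. -/
lemma chain_tail
    (hanti : ∀ j : ZMod (2 * N), η j * η (j + 1) = -(η (j + 1) * η j))
    (hcomm : ∀ j k : ZMod (2 * N), k ≠ j + 1 → k ≠ j - 1 → η j * η k = η k * η j)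
    (hsq : ∀ j : ZMod (2 * N), η j ^ 2 = 1)
    (hN : 2 ≤ N) (s : ZMod (2 * N)) :
    chainEta η s (4 * N - 1) = η (s - 1) := by
  have e : chainEta η s ((4 * N - 1) + 1)
      = chainEta η s (4 * N - 1) * η (s + ((4 * N - 1 : ℕ) : ZMod (2 * N))) :=
    chainEta_succ η _ _
  have hcast : ((4 * N - 1 : ℕ) : ZMod (2 * N)) = -1 := by
    have h0 : (((4 * N - 1) + 1 : ℕ) : ZMod (2 * N)) = 0 := by
      rw [show (4 * N - 1) + 1 = 4 * N by omega,
        ZMod.natCast_eq_zero_iff]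
      exact ⟨2, by omega⟩
    push_cast at h0
    linear_combination h0
  rw [show (4 * N - 1) + 1 = 4 * N by omega, hcast,
    show s + (-1 : ZMod (2 * N)) = s - 1 by ring,
    chain_two_cycles η hanti hcomm hsq hN s] at e
  have hss : η (s - 1) * η (s - 1) = 1 := eta_mul_self η hsq _
  calc chainEta η s (4 * N - 1)
      = chainEta η s (4 * N - 1) * (η (s - 1) * η (s - 1)) := by rw [hss, mul_one]
    _ = (chainEta η s (4 * N - 1) * η (s - 1)) * η (s - 1) := by rw [mul_assoc]
    _ = 1 * η (s - 1) := by rw [← e]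
    _ = η (s - 1) := one_mul _

end ChainAux

/-- The closure relations `A_{l+2N} = A_l` and `G_{l+2N} = G_l`
hold for all `l ≥ 0`, for the elements `A_l` (`l ∈ ℤ`) and `G_l` built from the
operators `η_j` satisfying the cyclic relations mod `2N`.  Ordered products of
consecutive `η`'s are taken as `List.prod` over increasing indices (read mod `2N`). -/
theorem closure_relations_of_eta_relations
    (N : ℕ) (hN : 2 ≤ N) (A : Type*) [Ring A] [Algebra ℂ A]
    (η : ZMod (2 * N) → A)
    (hanti : ∀ j : ZMod (2 * N), η j * η (j + 1) = -(η (j + 1) * η j))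
    (hcomm : ∀ j k : ZMod (2 * N), k ≠ j + 1 → k ≠ j - 1 → η j * η k = η k * η j)
    (hsq : ∀ j : ZMod (2 * N), η j ^ 2 = 1)
    (AA GG : ℤ → A)
    (hA0 : AA 0 = ∑ j ∈ Finset.range N, η (2 * (j : ZMod (2 * N)) + 1))
    (hApos : ∀ l : ℕ, 1 ≤ l →
      AA l = ∑ j ∈ Finset.range N,
        ((List.range (2 * l - 1)).map
          (fun i => η (2 * ((j : ZMod (2 * N)) + 1) + (i : ZMod (2 * N))))).prod)
    (hAneg : ∀ l : ℕ, 1 ≤ l →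
      AA (-(l : ℤ)) = ∑ j ∈ Finset.range N,
        ((List.range (2 * l + 1)).map
          (fun i => η (2 * ((j : ZMod (2 * N)) + 1) - (2 * (l : ZMod (2 * N)) + 1)
            + (i : ZMod (2 * N))))).prod)
    (hG0 : GG 0 = 0)
    (hGpos : ∀ l : ℕ, 1 ≤ l →
      GG l = (2 : ℂ)⁻¹ • ∑ j ∈ Finset.range N,
        (((List.range (2 * l)).map
            (fun i => η (2 * ((j : ZMod (2 * N)) + 1) + (i : ZMod (2 * N))))).prod
          - ((List.range (2 * l)).map
            (fun i => η (2 * ((j : ZMod (2 * N)) + 1) - 1 + (i : ZMod (2 * N))))).prod)) :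
    ∀ l : ℕ, AA ((l : ℤ) + 2 * N) = AA l ∧ GG ((l : ℤ) + 2 * N) = GG l := by
  have hApos' : ∀ l : ℕ, 1 ≤ l →
      AA l = ∑ j ∈ Finset.range N,
        chainEta η (2 * ((j : ZMod (2 * N)) + 1)) (2 * l - 1) := hApos
  have hGpos' : ∀ l : ℕ, 1 ≤ l →
      GG l = (2 : ℂ)⁻¹ • ∑ j ∈ Finset.range N,
        (chainEta η (2 * ((j : ZMod (2 * N)) + 1)) (2 * l)
          - chainEta η (2 * ((j : ZMod (2 * N)) + 1) - 1) (2 * l)) := hGpos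
  intro l
  have hcast : ((l : ℤ) + 2 * N) = ((l + 2 * N : ℕ) : ℤ) := by push_cast; ring
  constructor
  · -- A part
    rcases Nat.eq_zero_or_pos l with hl0 | hlpos
    · subst hl0
      rw [hcast, show (0 + 2 * N : ℕ) = 2 * N by omega,
        hApos' (2 * N) (by omega), show ((0 : ℕ) : ℤ) = (0 : ℤ) by norm_num, hA0]
      refine Finset.sum_congr rfl fun j _ => ?_
      rw [show 2 * (2 * N) - 1 = 4 * N - 1 by omega,
        chain_tail η hanti hcomm hsq hN]
      congr 1
      ring
    · rw [hcast, hApos' (l + 2 * N) (by omega), hApos' l hlpos]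
      refine Finset.sum_congr rfl fun j _ => ?_
      rw [show 2 * (l + 2 * N) - 1 = (2 * l - 1) + 4 * N by omega, chainEta_add,
        chain_two_cycles η hanti hcomm hsq hN, mul_one]
  · -- G part
    rcases Nat.eq_zero_or_pos l with hl0 | hlpos
    · subst hl0
      rw [hcast, show (0 + 2 * N : ℕ) = 2 * N by omega,
        hGpos' (2 * N) (by omega), show ((0 : ℕ) : ℤ) = (0 : ℤ) by norm_num, hG0]
      have hz : ∑ j ∈ Finset.range N,
          (chainEta η (2 * ((j : ZMod (2 * N)) + 1)) (2 * (2 * N))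
            - chainEta η (2 * ((j : ZMod (2 * N)) + 1) - 1) (2 * (2 * N))) = 0 := by
        refine Finset.sum_eq_zero fun j _ => ?_
        rw [show 2 * (2 * N) = 4 * N by omega,
          chain_two_cycles η hanti hcomm hsq hN,
          chain_two_cycles η hanti hcomm hsq hN, sub_self]
      rw [hz, smul_zero]
    · rw [hcast, hGpos' (l + 2 * N) (by omega), hGpos' l hlpos]
      congr 1
      refine Finset.sum_congr rfl fun j _ => ?_
      rw [show 2 * (l + 2 * N) = 2 * l + 4 * N by omega]
      rw [chainEta_add, chainEta_add,
        chain_two_cycles η hanti hcomm hsq hN,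
        chain_two_cycles η hanti hcomm hsq hN, mul_one, mul_one]
end

section
/- Let k ≥ 1 with k ≡ 1 or 2 (mod 3), set n = 3k and ω = exp(2πi/n), let N ≥ 2, and let η_1, …, η_{2N} be elements of an associative unital ℂ-algebra, indexed cyclically mod 2N, satisfying η_j η_{j+1} = ω η_{j+1} η_j for all j, η_j η_k = η_k η_j whenever k ≢ j±1 (mod 2N), and η_j^n = 1 for all j. Define A₀ = Σ_{j=1}^{N} (η_{2j−1}^k − η_{2j−1}^{n−k}) and A₁ = Σ_{j=1}^{N} (η_{2j}^k − η_{2j}^{n−k}). Then A₀ and A₁ satisfy the Dolan–Grady condition with constant C = −27, i.e. [A₀,[A₀,[A₀,A₁]]] = −27·[A₀,A₁] and [A₁,[A₁,[A₁,A₀]]] = −27·[A₁,A₀]. -/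
/-!
Put `u j = η j ^ k`. Then `u j ^ 3 = 1`, `η j ^ (n - k) = u j ^ 2`, and
`u j * u (j + 1) = q • (u (j + 1) * u j)` with `q = ω ^ (k * k)`, a primitive cube root of unity
because `3 ∤ k`. The summand `u e - u e ^ 2` of `A₁` at an even site `e` commutes with every
summand of `A₀` except the two at the neighbours `e ± 1`, and a direct computation with the three
generators `u (e - 1)`, `u e`, `u (e + 1)` gives `ad_{A₀}³ = -27 ad_{A₀}` on that summand.
Summing over `e` gives the first relation; exchanging odd and even sites gives the second.
-/

open Finset

section DolanGrady

variable {R A : Type*} [CommRing R] [Ring A] [Algebra R A]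

attribute [local instance] LieRing.ofAssociativeRing

def DolanGradyRel (C : R) (a b : A) : Prop := ⁅a, ⁅a, ⁅a, b⁆⁆⁆ = C • ⁅a, b⁆

theorem DolanGradyRel.sum_right {ι : Type*} {C : R} {a : A} {s : Finset ι} {b : ι → A}
    (h : ∀ i ∈ s, DolanGradyRel C a (b i)) : DolanGradyRel C a (∑ i ∈ s, b i) := by
  simp only [DolanGradyRel, lie_sum, smul_sum] at h ⊢
  exact sum_congr rfl h

theorem DolanGradyRel.add_of_commute {C : R} {a b t : A} (h : DolanGradyRel C a b)
    (hta : Commute t a) (htb : Commute t b) : DolanGradyRel C (a + t) b := by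
  have hstep : ∀ y : A, Commute t y → ⁅a + t, y⁆ = ⁅a, y⁆ ∧ Commute t ⁅a, y⁆ :=
    fun y hy => ⟨by rw [add_lie, (hy.lie_eq : ⁅t, y⁆ = 0), add_zero],
      by rw [Ring.lie_def]; exact (hta.mul_right hy).sub_right (hy.mul_right hta)⟩
  obtain ⟨e₁, c₁⟩ := hstep b htb
  obtain ⟨e₂, c₂⟩ := hstep _ c₁
  obtain ⟨e₃, -⟩ := hstep _ c₂
  rw [DolanGradyRel, e₁, e₂, e₃]
  exact h

theorem dolanGradyRel_of_cube_eq_one {q : R} (hq : q ^ 2 + q + 1 = 0) {u v w : A}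
    (hu : u ^ 3 = 1) (hw : w ^ 3 = 1) (huv : u * v = q • (v * u)) (hvw : v * w = q • (w * v))
    (huw : u * w = w * u) :
    DolanGradyRel (-27 : R) ((u - u ^ 2) + (w - w ^ 2)) (v - v ^ 2) := by
  have cube : ∀ x : A, x ^ 3 = 1 → ∀ t : A, x * (x * (x * t)) = t := fun x hx t => by
    rw [← mul_assoc, ← mul_assoc, ← pow_three', hx, one_mul]
  have huv' : ∀ t : A, u * (v * t) = q • (v * (u * t)) := fun t => by
    rw [← mul_assoc, huv, smul_mul_assoc, mul_assoc]
  have hvw' : ∀ t : A, v * (w * t) = q • (w * (v * t)) := fun t => by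
    rw [← mul_assoc, hvw, smul_mul_assoc, mul_assoc]
  have huw' : ∀ t : A, u * (w * t) = w * (u * t) := fun t => by
    rw [← mul_assoc, huw, mul_assoc]
  -- Normal-order every monomial as `w ^ c * v ^ b * u ^ a`; the coefficients are then
  -- polynomials in `q`, to be compared modulo `q ^ 2 + q + 1`.
  simp only [DolanGradyRel, Ring.lie_def, pow_two, sub_mul, mul_sub, add_mul, mul_add, smul_sub,
    smul_add, smul_mul_assoc, mul_smul_comm, smul_smul, mul_assoc, huv, hvw, huw, huv', hvw',
    huw', cube w hw, ← pow_three, hu, mul_one]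
  match_scalars <;> grind

theorem mul_pow_eq_smul_of_mul_eq_smul {s : R} {x y : A} (h : x * y = s • (y * x)) (b : ℕ) :
    x * y ^ b = s ^ b • (y ^ b * x) := by
  induction b with
  | zero => simp
  | succ b ih =>
    rw [pow_succ, ← mul_assoc, ih, smul_mul_assoc, mul_assoc, h, mul_smul_comm, smul_smul,
      ← pow_succ, mul_assoc]

theorem pow_mul_eq_smul_of_mul_eq_smul {s : R} {x y : A} (h : x * y = s • (y * x)) (a : ℕ) :
    x ^ a * y = s ^ a • (y * x ^ a) := by
  induction a with
  | zero => simp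
  | succ a ih =>
    rw [pow_succ, mul_assoc, h, mul_smul_comm, ← mul_assoc, ih, smul_mul_assoc, smul_smul,
      ← pow_succ', mul_assoc, ← pow_succ]

theorem pow_mul_pow_eq_smul_of_mul_eq_smul {s : R} {x y : A} (h : x * y = s • (y * x))
    (a b : ℕ) : x ^ a * y ^ b = s ^ (a * b) • (y ^ b * x ^ a) := by
  rw [pow_mul_eq_smul_of_mul_eq_smul (mul_pow_eq_smul_of_mul_eq_smul h b), ← pow_mul, mul_comm]

end DolanGrady

section ClockChain

variable {G R A : Type*} [AddGroupWithOne G] [CommRing R] [Ring A] [Algebra R A]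

structure IsClockChain (q : R) (u : G → A) : Prop where
  pow_three : ∀ j, u j ^ 3 = 1
  mul_add_one : ∀ j, u j * u (j + 1) = q • (u (j + 1) * u j)
  commute : ∀ j l, l ≠ j + 1 → l ≠ j - 1 → Commute (u j) (u l)

theorem Commute.self_sub_sq {a b : A} (h : Commute a b) : Commute (a - a ^ 2) (b - b ^ 2) :=
  (h.sub_right (h.pow_right 2)).sub_left ((h.pow_left 2).sub_right (h.pow_pow 2 2))

theorem IsClockChain.commute_of_mem {q : R} {u : G → A} (hu : IsClockChain q u) {s : Finset G}
    (hs : ∀ x ∈ s, x + 1 ∉ s) {x y : G} (hx : x ∈ s) (hy : y ∈ s) : Commute (u x) (u y) :=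
  hu.commute x y (fun h => hs x hx (h ▸ hy)) fun h => hs y hy (by rwa [h, sub_add_cancel])

theorem IsClockChain.dolanGradyRel_sum {q : R} {u : G → A} (hu : IsClockChain q u)
    (hq : q ^ 2 + q + 1 = 0) (h2 : (2 : G) ≠ 0) {s t : Finset G} (hs : ∀ x ∈ s, x + 1 ∉ s)
    (ht : ∀ e ∈ t, e - 1 ∈ s ∧ e + 1 ∈ s) :
    DolanGradyRel (-27 : R) (∑ x ∈ s, (u x - u x ^ 2)) (∑ e ∈ t, (u e - u e ^ 2)) := by
  classical
  refine DolanGradyRel.sum_right fun e he => ?_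
  obtain ⟨hl, hr⟩ := ht e he
  have hne : e + 1 ≠ e - 1 := by
    intro h
    apply h2
    rw [← one_add_one_eq_two]
    exact eq_neg_iff_add_eq_zero.1 (add_left_cancel (h.trans (sub_eq_add_neg e 1)))
  have hr' : e + 1 ∈ s.erase (e - 1) := mem_erase.2 ⟨hne, hr⟩
  rw [← add_sum_erase s _ hl, ← add_sum_erase _ _ hr', ← add_assoc]
  have huv := hu.mul_add_one (e - 1)
  rw [sub_add_cancel] at huv
  refine (dolanGradyRel_of_cube_eq_one hq (hu.pow_three _) (hu.pow_three _) huv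
    (hu.mul_add_one e) (hu.commute_of_mem hs hl hr).eq).add_of_commute ?_ ?_
  · refine Commute.sum_left _ _ _ fun x hx => ?_
    have hx' := mem_of_mem_erase (mem_of_mem_erase hx)
    exact (hu.commute_of_mem hs hx' hl).self_sub_sq.add_right
      (hu.commute_of_mem hs hx' hr).self_sub_sq
  · refine Commute.sum_left _ _ _ fun x hx => ?_
    obtain ⟨hxr, hxl, -⟩ := mem_erase.1 hx |>.imp_right mem_erase.1
    exact (hu.commute e x hxr hxl).symm.self_sub_sq

end ClockChain

theorem Complex.isPrimitiveRoot_exp_pow_pow {k : ℕ} (hk : ¬ 3 ∣ k) :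
    IsPrimitiveRoot ((exp (2 * Real.pi * I / (3 * k : ℕ)) ^ k) ^ k) 3 :=
  ((isPrimitiveRoot_exp _ (by omega)).pow (by omega) (mul_comm 3 k)).pow_of_coprime k
    ((Nat.Prime.coprime_iff_not_dvd Nat.prime_three).2 hk).symm

theorem IsPrimitiveRoot.sq_add_self_add_one {R : Type*} [CommRing R] [IsDomain R] {ζ : R}
    (h : IsPrimitiveRoot ζ 3) : ζ ^ 2 + ζ + 1 = 0 := by
  have h3 := h.geom_sum_eq_zero (by norm_num)
  simp only [sum_range_succ, sum_range_zero, pow_zero, pow_one, zero_add] at h3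
  linear_combination h3

namespace ZMod

def parityClass (N : ℕ) (c : ZMod (2 * N)) : Finset (ZMod (2 * N)) :=
  (range N).image fun i : ℕ => 2 * (i : ZMod (2 * N)) + c

theorem two_mul_ne_one {N : ℕ} (x : ZMod (2 * N)) : 2 * x ≠ 1 := by
  intro h
  have h2 := congrArg (castHom (dvd_mul_right 2 N) (ZMod 2)) h
  rw [map_mul, map_ofNat, map_one, show (2 : ZMod 2) = 0 from rfl, zero_mul] at h2
  exact zero_ne_one h2

theorem two_ne_zero_of_two_le {N : ℕ} (hN : 2 ≤ N) : (2 : ZMod (2 * N)) ≠ 0 := by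
  rw [show (2 : ZMod (2 * N)) = ((2 : ℕ) : ZMod (2 * N)) from rfl, Ne, natCast_eq_zero_iff]
  exact fun h => absurd (Nat.le_of_dvd two_pos h) (by omega)

theorem mem_parityClass {N : ℕ} [NeZero N] {c x : ZMod (2 * N)} :
    x ∈ parityClass N c ↔ ∃ y, x = 2 * y + c := by
  simp only [parityClass, mem_image, mem_range]
  constructor
  · rintro ⟨i, -, rfl⟩
    exact ⟨i, rfl⟩
  · rintro ⟨y, rfl⟩
    refine ⟨y.val % N, Nat.mod_lt _ (NeZero.pos N), ?_⟩
    have h2N : (2 * N : ZMod (2 * N)) = 0 := by exact_mod_cast natCast_self (2 * N)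
    conv_rhs => rw [← natCast_zmod_val y, ← Nat.mod_add_div y.val N]
    push_cast
    linear_combination -((y.val / N : ℕ) : ZMod (2 * N)) * h2N

theorem injOn_two_mul_add (N : ℕ) (c : ZMod (2 * N)) :
    Set.InjOn (fun i : ℕ => 2 * (i : ZMod (2 * N)) + c) (range N) := by
  intro i hi j hj h
  simp only [coe_range, Set.mem_Iio] at hi hj
  have h' : ((2 * i : ℕ) : ZMod (2 * N)) = ((2 * j : ℕ) : ZMod (2 * N)) := by
    push_cast
    exact add_right_cancel h
  rw [natCast_eq_natCast_iff', Nat.mod_eq_of_lt (by omega), Nat.mod_eq_of_lt (by omega)] at h'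
  omega

theorem sum_parityClass {M : Type*} [AddCommMonoid M] (N : ℕ) (c : ZMod (2 * N))
    (f : ZMod (2 * N) → M) :
    ∑ x ∈ parityClass N c, f x = ∑ i ∈ range N, f (2 * i + c) :=
  sum_image (injOn_two_mul_add N c)

theorem add_one_notMem_parityClass {N : ℕ} {c x : ZMod (2 * N)} (hx : x ∈ parityClass N c) :
    x + 1 ∉ parityClass N c := by
  simp only [parityClass, mem_image] at hx ⊢
  rintro ⟨j, -, hj⟩
  obtain ⟨i, -, rfl⟩ := hx
  exact two_mul_ne_one ((j : ZMod (2 * N)) - (i : ZMod (2 * N))) (by linear_combination hj)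

end ZMod

theorem dolan_grady_clock_third_general
    (k n : ℕ) (hkmod : k % 3 = 1 ∨ k % 3 = 2) (hn : n = 3 * k)
    (N : ℕ) (hN : 2 ≤ N) (A : Type*) [Ring A] [Algebra ℂ A]
    (ω : ℂ) (hω : ω = Complex.exp (2 * Real.pi * Complex.I / n))
    (η : ZMod (2 * N) → A)
    (hanti : ∀ j : ZMod (2 * N), η j * η (j + 1) = ω • (η (j + 1) * η j))
    (hcomm : ∀ j l : ZMod (2 * N), l ≠ j + 1 → l ≠ j - 1 → η j * η l = η l * η j)
    (hpow : ∀ j : ZMod (2 * N), η j ^ n = 1)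
    (A₀ A₁ : A)
    (hA₀ : A₀ = ∑ j ∈ Finset.range N,
      (η (2 * (j : ZMod (2 * N)) + 1) ^ k - η (2 * (j : ZMod (2 * N)) + 1) ^ (n - k)))
    (hA₁ : A₁ = ∑ j ∈ Finset.range N,
      (η (2 * (j : ZMod (2 * N)) + 2) ^ k - η (2 * (j : ZMod (2 * N)) + 2) ^ (n - k))) :
    ⁅A₀, ⁅A₀, ⁅A₀, A₁⁆⁆⁆ = (-27 : ℂ) • ⁅A₀, A₁⁆ ∧
    ⁅A₁, ⁅A₁, ⁅A₁, A₀⁆⁆⁆ = (-27 : ℂ) • ⁅A₁, A₀⁆ := by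
  subst hn
  have : NeZero N := ⟨by omega⟩
  have hq : IsPrimitiveRoot ((ω ^ k) ^ k) 3 :=
    hω ▸ Complex.isPrimitiveRoot_exp_pow_pow (by omega)
  have hu : IsClockChain ((ω ^ k) ^ k) fun j => η j ^ k :=
    { pow_three := fun j => by rw [← pow_mul, mul_comm, hpow]
      mul_add_one := fun j => by rw [← pow_mul, pow_mul_pow_eq_smul_of_mul_eq_smul (hanti j)]
      commute := fun j l h₁ h₂ => Commute.pow_pow (hcomm j l h₁ h₂) k k }
  have hsq : 3 * k - k = k * 2 := by omega
  simp only [hsq, pow_mul] at hA₀ hA₁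
  rw [← ZMod.sum_parityClass N 1 fun x => η x ^ k - (η x ^ k) ^ 2] at hA₀
  rw [← ZMod.sum_parityClass N 2 fun x => η x ^ k - (η x ^ k) ^ 2] at hA₁
  have hnbr_even : ∀ e ∈ ZMod.parityClass N 2,
      e - 1 ∈ ZMod.parityClass N 1 ∧ e + 1 ∈ ZMod.parityClass N 1 := by
    simp only [ZMod.mem_parityClass]
    rintro e ⟨y, rfl⟩
    exact ⟨⟨y, by ring⟩, y + 1, by ring⟩
  have hnbr_odd : ∀ e ∈ ZMod.parityClass N 1,
      e - 1 ∈ ZMod.parityClass N 2 ∧ e + 1 ∈ ZMod.parityClass N 2 := by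
    simp only [ZMod.mem_parityClass]
    rintro e ⟨y, rfl⟩
    exact ⟨⟨y - 1, by ring⟩, y, by ring⟩
  subst hA₀ hA₁
  exact ⟨hu.dolanGradyRel_sum hq.sq_add_self_add_one (ZMod.two_ne_zero_of_two_le hN)
      (fun _ => ZMod.add_one_notMem_parityClass) hnbr_even,
    hu.dolanGradyRel_sum hq.sq_add_self_add_one (ZMod.two_ne_zero_of_two_le hN)
      (fun _ => ZMod.add_one_notMem_parityClass) hnbr_odd⟩

/-- Theorem 2 of the paper, case `k ≢ 0 (mod 3)`.
Let `k ≥ 1` with `k ≡ 1` or `2 (mod 3)`, `n = 3k`, `ω = exp(2πi/n)`, and let `η_j`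
(indexed cyclically mod `2N`, `N ≥ 2`) satisfy `η_j η_{j+1} = ω η_{j+1} η_j`,
`η_j η_k = η_k η_j` for `k ≢ j ± 1 (mod 2N)`, and `η_j^n = 1`.
Then `A₀ = Σ (η_{2j−1}^k − η_{2j−1}^{n−k})` and `A₁ = Σ (η_{2j}^k − η_{2j}^{n−k})`
satisfy the Dolan–Grady condition with constant `C = −27`. -/
theorem dolan_grady_clock_third
    (k n : ℕ) (hk1 : 1 ≤ k) (hkmod : k % 3 = 1 ∨ k % 3 = 2) (hn : n = 3 * k)
    (N : ℕ) (hN : 2 ≤ N) (A : Type*) [Ring A] [Algebra ℂ A]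
    (ω : ℂ) (hω : ω = Complex.exp (2 * Real.pi * Complex.I / n))
    (η : ZMod (2 * N) → A)
    (hanti : ∀ j : ZMod (2 * N), η j * η (j + 1) = ω • (η (j + 1) * η j))
    (hcomm : ∀ j l : ZMod (2 * N), l ≠ j + 1 → l ≠ j - 1 → η j * η l = η l * η j)
    (hpow : ∀ j : ZMod (2 * N), η j ^ n = 1)
    (A₀ A₁ : A)
    (hA₀ : A₀ = ∑ j ∈ Finset.range N,
      (η (2 * (j : ZMod (2 * N)) + 1) ^ k - η (2 * (j : ZMod (2 * N)) + 1) ^ (n - k)))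
    (hA₁ : A₁ = ∑ j ∈ Finset.range N,
      (η (2 * (j : ZMod (2 * N)) + 2) ^ k - η (2 * (j : ZMod (2 * N)) + 2) ^ (n - k))) :
    ⁅A₀, ⁅A₀, ⁅A₀, A₁⁆⁆⁆ = (-27 : ℂ) • ⁅A₀, A₁⁆ ∧
    ⁅A₁, ⁅A₁, ⁅A₁, A₀⁆⁆⁆ = (-27 : ℂ) • ⁅A₁, A₀⁆ :=
  dolan_grady_clock_third_general k n hkmod hn N hN A ω hω η hanti hcomm hpow A₀ A₁ hA₀ hA₁
end

section
/- Let k ≥ 1 with k ≡ 0 (mod 3), set n = 3k and ω = exp(2πi/n), let N ≥ 2, and let η_1, …, η_{2N} be elements of an associative unital ℂ-algebra, indexed cyclically mod 2N, satisfying η_j η_{j+1} = ω η_{j+1} η_j for all j, η_j η_k = η_k η_j whenever k ≢ j±1 (mod 2N), and η_j^n = 1 for all j. Then A₀ = Σ_{j=1}^{N} (η_{2j−1}^k − η_{2j−1}^{n−k}) and A₁ = Σ_{j=1}^{N} (η_{2j}^k − η_{2j}^{n−k}) commute: [A₀, A₁] = 0. -/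
lemma swap_pow_one {A : Type*} [Ring A] [Algebra ℂ A] (ω : ℂ) (x y : A)
    (h : x * y = ω • (y * x)) (b : ℕ) : x * y ^ b = ω ^ b • (y ^ b * x) := by
  induction b with
  | zero => simp
  | succ b ih =>
    calc x * y ^ (b+1) = (x * y ^ b) * y := by rw [pow_succ, mul_assoc]
    _ = ω ^ b • (y ^ b * (x * y)) := by rw [ih, smul_mul_assoc, mul_assoc]
    _ = ω ^ b • (ω • (y ^ b * (y * x))) := by rw [h, mul_smul_comm]
    _ = ω ^ (b+1) • (y ^ (b+1) * x) := by
        rw [smul_smul, pow_succ, pow_succ, mul_assoc]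

lemma swap_pow {A : Type*} [Ring A] [Algebra ℂ A] (ω : ℂ) (x y : A)
    (h : x * y = ω • (y * x)) (a b : ℕ) :
    x ^ a * y ^ b = ω ^ (a * b) • (y ^ b * x ^ a) := by
  induction a with
  | zero => simp
  | succ a ih =>
    calc x ^ (a+1) * y ^ b = x ^ a * (x * y ^ b) := by rw [pow_succ, mul_assoc]
    _ = ω ^ b • (x ^ a * y ^ b * x) := by rw [swap_pow_one ω x y h b, mul_smul_comm, mul_assoc]
    _ = ω ^ b • (ω ^ (a*b) • (y ^ b * x ^ a) * x) := by rw [ih]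
    _ = ω ^ ((a+1) * b) • (y ^ b * x ^ (a+1)) := by
        rw [smul_mul_assoc, smul_smul, ← pow_add, mul_assoc, ← pow_succ]
        ring_nf

/-- Theorem 2 of the paper, case `k ≡ 0 (mod 3)`.
Let `k ≥ 1` with `k ≡ 0 (mod 3)`, `n = 3k`, `ω = exp(2πi/n)`, and let `η_j`
(indexed cyclically mod `2N`, `N ≥ 2`) satisfy `η_j η_{j+1} = ω η_{j+1} η_j`,
`η_j η_k = η_k η_j` for `k ≢ j ± 1 (mod 2N)`, and `η_j^n = 1`.
Then `A₀ = Σ (η_{2j−1}^k − η_{2j−1}^{n−k})` and `A₁ = Σ (η_{2j}^k − η_{2j}^{n−k})`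
commute: `[A₀, A₁] = 0`. -/
theorem commute_clock_third
    (k n : ℕ) (hk1 : 1 ≤ k) (hkmod : k % 3 = 0) (hn : n = 3 * k)
    (N : ℕ) (hN : 2 ≤ N) (A : Type*) [Ring A] [Algebra ℂ A]
    (ω : ℂ) (hω : ω = Complex.exp (2 * Real.pi * Complex.I / n))
    (η : ZMod (2 * N) → A)
    (hanti : ∀ j : ZMod (2 * N), η j * η (j + 1) = ω • (η (j + 1) * η j))
    (hcomm : ∀ j l : ZMod (2 * N), l ≠ j + 1 → l ≠ j - 1 → η j * η l = η l * η j)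
    (hpow : ∀ j : ZMod (2 * N), η j ^ n = 1)
    (A₀ A₁ : A)
    (hA₀ : A₀ = ∑ j ∈ Finset.range N,
      (η (2 * (j : ZMod (2 * N)) + 1) ^ k - η (2 * (j : ZMod (2 * N)) + 1) ^ (n - k)))
    (hA₁ : A₁ = ∑ j ∈ Finset.range N,
      (η (2 * (j : ZMod (2 * N)) + 2) ^ k - η (2 * (j : ZMod (2 * N)) + 2) ^ (n - k))) :
    ⁅A₀, A₁⁆ = 0 := by
  have hn0 : (n : ℂ) ≠ 0 := by
    have : 0 < n := by omega
    exact_mod_cast Nat.cast_ne_zero.mpr this.ne'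
  have hωn : ω ^ n = 1 := by
    rw [hω, ← Complex.exp_nat_mul, mul_div_cancel₀ _ hn0, Complex.exp_two_pi_mul_I]
  -- any needed power of ω is 1
  have hωpow : ∀ a b : ℕ, a ∈ ({k, n - k} : Set ℕ) → b ∈ ({k, n - k} : Set ℕ) →
      ω ^ (a * b) = 1 := by
    intro a b ha hb
    have hdvd : n ∣ a * b := by
      obtain ⟨m, hm⟩ := Nat.dvd_of_mod_eq_zero hkmod
      have nk : n - k = 2 * k := by omega
      simp only [Set.mem_insert_iff, Set.mem_singleton_iff] at ha hb
      rcases ha with ha | ha <;> rcases hb with hb | hb <;> subst ha hb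
      · exact ⟨m, by subst hn hm; ring⟩
      · exact ⟨2*m, by rw [nk]; subst hn hm; ring⟩
      · exact ⟨2*m, by rw [nk]; subst hn hm; ring⟩
      · exact ⟨4*m, by rw [nk]; subst hn hm; ring⟩
    obtain ⟨c, hc⟩ := hdvd
    rw [hc, pow_mul, hωn, one_pow]
  -- key commutation
  have key : ∀ (i l : ZMod (2 * N)) (a b : ℕ), a ∈ ({k, n - k} : Set ℕ) →
      b ∈ ({k, n - k} : Set ℕ) → Commute (η i ^ a) (η l ^ b) := by
    intro i l a b ha hb
    by_cases h1 : l = i + 1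
    · subst h1
      have := swap_pow ω (η i) (η (i+1)) (hanti i) a b
      rw [hωpow a b ha hb, one_smul] at this
      exact this
    by_cases h2 : l = i - 1
    · subst h2
      have := swap_pow ω (η (i-1)) (η i) (by simpa using hanti (i - 1)) b a
      rw [hωpow b a hb ha, one_smul] at this
      exact this.symm
    · exact (Commute.pow_pow (hcomm i l h1 h2) a b)
  have hc : Commute A₀ A₁ := by
    rw [hA₀, hA₁]
    refine Commute.sum_left _ _ _ fun j _ => Commute.sum_right _ _ _ fun i _ => ?_
    refine Commute.sub_left (Commute.sub_right ?_ ?_) (Commute.sub_right ?_ ?_) <;>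
      apply key <;> simp
  rw [hc.lie_eq]
end

section
/- Let k ≥ 1, set n = 3k and ω = exp(2πi/n), let N ≥ 2, and let η_1, …, η_{2N} be elements of an associative unital ℂ-algebra, indexed cyclically mod 2N, satisfying η_j η_{j+1} = ω η_{j+1} η_j for all j, η_j η_k = η_k η_j whenever k ≢ j±1 (mod 2N), and η_j^n = 1 for all j. Set A₀ = Σ_{j=1}^{N} (η_{2j−1}^k − η_{2j−1}^{n−k}), z = 1 − ω^{−k²} and z̄ = 1 − ω^{k²}. Then for every j, the triple commutator satisfies [A₀,[A₀,[A₀, η_{2j}^k]]] = −9 z z̄ · [A₀, η_{2j}^k], and likewise [A₀,[A₀,[A₀, η_{2j}^{n−k}]]] = −9 z z̄ · [A₀, η_{2j}^{n−k}]. -/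
/-!
Every odd site other than `2j ∓ 1` commutes with `η (2j - 1)`, `η (2j)` and `η (2j + 1)`, so in
the triple commutator `A₀` may be replaced by `B = (a - a²) + (c - c²)`, where `a = η (2j - 1) ^ k`,
`c = η (2j + 1) ^ k`, `x = η (2j) ^ k` and `q = ω ^ k²` satisfy `a³ = c³ = q³ = 1`,
`a x = q x a`, `x c = q c x` and `a c = c a`. Then `⁅B, x⁆ = x T` with `T` in the commutative
algebra generated by `a` and `c`, hence `ad_B^m x = x T^m`. Moreover `T = (q² - q)(e - f)` for
`e = 1 + q²a + (q²a)²` and `f = 1 + qc + (qc)²`; since `e² = 3e` and `f² = 3f`, this gives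
`T³ = 9 (q² - q)² T = -9 (1 - q²)(1 - q) T`. The identity for `η (2j) ^ (n - k) = x²` is the same
argument with `q²` in place of `q`.
-/

open Finset

section CommRing
variable {R : Type*} [CommRing R]

theorem geom_sq_eq_three_mul {v : R} (hv : v ^ 3 = 1) :
    (1 + v + v ^ 2) ^ 2 = 3 * (1 + v + v ^ 2) := by
  linear_combination (v + 2) * hv

theorem sub_pow_three_eq_nine_mul {e f : R} (he : e ^ 2 = 3 * e) (hf : f ^ 2 = 3 * f) :
    (e - f) ^ 3 = 9 * (e - f) := by
  linear_combination (e + 3 - 3 * f) * he + (3 * e - f - 3) * hf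

theorem clock_shift_cube {K : Type*} [CommRing K] [Algebra K R] {q : K} {a c : R}
    (hq : q ^ 3 = 1) (ha : a ^ 3 = 1) (hc : c ^ 3 = 1) :
    ((q - 1) • a + (1 - q ^ 2) • a ^ 2 + ((q ^ 2 - 1) • c + (1 - q) • c ^ 2)) ^ 3
      = (-9 * (1 - q ^ 2) * (1 - q)) •
        ((q - 1) • a + (1 - q ^ 2) • a ^ 2 + ((q ^ 2 - 1) • c + (1 - q) • c ^ 2)) := by
  simp only [Algebra.smul_def, map_sub, map_one, map_pow, map_mul, map_neg, map_ofNat]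
  set Q := algebraMap K R q
  have hQ : Q ^ 3 = 1 := by rw [← map_pow, hq, map_one]
  set e := 1 + Q ^ 2 * a + (Q ^ 2 * a) ^ 2
  set f := 1 + Q * c + (Q * c) ^ 2
  have hT : (Q - 1) * a + (1 - Q ^ 2) * a ^ 2 + ((Q ^ 2 - 1) * c + (1 - Q) * c ^ 2)
      = (Q ^ 2 - Q) * (e - f) := by
    linear_combination ((1 - Q) * a + (Q ^ 2 - 1 - Q ^ 3) * a ^ 2 + c + (Q - 1) * c ^ 2) * hQ
  have he : e ^ 2 = 3 * e :=
    geom_sq_eq_three_mul (by rw [mul_pow, ← pow_mul, pow_mul', hQ, ha]; ring)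
  have hf : f ^ 2 = 3 * f := geom_sq_eq_three_mul (by rw [mul_pow, hQ, hc, one_mul])
  rw [hT, mul_pow, sub_pow_three_eq_nine_mul he hf]
  linear_combination (9 * (Q - 1) * (e - f) * (Q ^ 2 - Q)) * hQ

end CommRing

section Clock

variable {K A : Type*} [CommRing K] [Ring A] [Algebra K A]

open scoped IsMulCommutative in
theorem clock_shift_cube_of_commute {q : K} {a c : A} (hq : q ^ 3 = 1) (ha : a ^ 3 = 1)
    (hc : c ^ 3 = 1) (hac : Commute a c) :
    ((q - 1) • a + (1 - q ^ 2) • a ^ 2 + ((q ^ 2 - 1) • c + (1 - q) • c ^ 2)) ^ 3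
      = (-9 * (1 - q ^ 2) * (1 - q)) •
        ((q - 1) • a + (1 - q ^ 2) • a ^ 2 + ((q ^ 2 - 1) • c + (1 - q) • c ^ 2)) := by
  let S := Algebra.adjoin K {a, c}
  have : IsMulCommutative S := Algebra.isMulCommutative_adjoin K (by
    simp only [Set.mem_insert_iff, Set.mem_singleton_iff]
    rintro x (rfl | rfl) y (rfl | rfl) <;> first | rfl | exact hac.eq | exact hac.eq.symm)
  let a' : S := ⟨a, Algebra.subset_adjoin (by simp)⟩
  let c' : S := ⟨c, Algebra.subset_adjoin (by simp)⟩
  have h := clock_shift_cube (a := a') (c := c') hq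
    (Subtype.ext (by simpa using ha)) (Subtype.ext (by simpa using hc))
  simpa only [a', c', Subalgebra.coe_add, Subalgebra.coe_smul, Subalgebra.coe_pow]
    using congrArg Subtype.val h

theorem pow_mul_pow_eq_smul_of_mul_eq_smul_s8 {q : K} {u v : A} (h : u * v = q • (v * u))
    (s t : ℕ) : u ^ s * v ^ t = q ^ (s * t) • (v ^ t * u ^ s) := by
  have key : ∀ t : ℕ, u * v ^ t = q ^ t • (v ^ t * u) := by
    intro t
    induction t with
    | zero => simp
    | succ t ih =>
      rw [pow_succ', ← mul_assoc, h, smul_mul_assoc, mul_assoc, ih, mul_smul_comm, smul_smul,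
        ← mul_assoc, pow_succ' q]
  induction s with
  | zero => simp
  | succ s ih =>
    rw [pow_succ, mul_assoc, key, mul_smul_comm, ← mul_assoc, ih, smul_mul_assoc, smul_smul,
      mul_assoc, ← pow_succ, ← pow_add, add_comm t, ← add_one_mul]

theorem lie_lie_lie_eq_smul_of_lie_eq_mul {μ : K} {B T x : A} (hBx : ⁅B, x⁆ = x * T)
    (hTB : Commute T B) (hT : T ^ 3 = μ • T) : ⁅B, ⁅B, ⁅B, x⁆⁆⁆ = μ • ⁅B, x⁆ := by
  have hstep : ∀ w : A, Commute w B → ⁅B, x * w⁆ = x * (T * w) := fun w hw => by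
    rw [Ring.lie_def, mul_assoc x, hw.eq, ← mul_assoc, ← mul_assoc, ← sub_mul, ← Ring.lie_def, hBx,
      mul_assoc]
  rw [hBx, hstep T hTB, hstep _ (hTB.mul_left hTB), ← pow_three, hT, mul_smul_comm]

theorem lie_add_of_commute {B R y : A} (h : Commute R y) : ⁅B + R, y⁆ = ⁅B, y⁆ := by
  rw [Ring.lie_def, Ring.lie_def, add_mul, mul_add, h.eq]
  abel

theorem Commute.lie_right {B R y : A} (hB : Commute R B) (hy : Commute R y) :
    Commute R ⁅B, y⁆ := by
  rw [Ring.lie_def]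
  exact (hB.mul_right hy).sub_right (hy.mul_right hB)

theorem lie_clock_eq_mul {q : K} (hq : q ^ 3 = 1) {a c x : A}
    (hax : a * x = q • (x * a)) (hxc : x * c = q • (c * x)) :
    ⁅a - a ^ 2 + (c - c ^ 2), x⁆
      = x * ((q - 1) • a + (1 - q ^ 2) • a ^ 2 + ((q ^ 2 - 1) • c + (1 - q) • c ^ 2)) := by
  have ha2x : a ^ 2 * x = q ^ 2 • (x * a ^ 2) := by
    simpa using pow_mul_pow_eq_smul_of_mul_eq_smul_s8 hax 2 1
  have hcx : c * x = q ^ 2 • (x * c) := by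
    rw [hxc, smul_smul, show q ^ 2 * q = 1 by linear_combination hq, one_smul]
  have hc2x : c ^ 2 * x = q • (x * c ^ 2) := by
    have h := pow_mul_pow_eq_smul_of_mul_eq_smul_s8 hcx 2 1
    rwa [pow_one, mul_one, ← pow_mul, show (q ^ (2 * 2)) = q by linear_combination q * hq] at h
  simp only [Ring.lie_def, add_mul, sub_mul, mul_add, mul_sub, hax, ha2x, hcx, hc2x, mul_smul_comm]
  module

theorem lie_lie_lie_clock {q : K} (hq : q ^ 3 = 1) {a c x R : A} (ha : a ^ 3 = 1)
    (hc : c ^ 3 = 1) (hax : a * x = q • (x * a)) (hxc : x * c = q • (c * x)) (hac : Commute a c)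
    (hRa : Commute R a) (hRc : Commute R c) (hRx : Commute R x) :
    ⁅a - a ^ 2 + (c - c ^ 2) + R, ⁅a - a ^ 2 + (c - c ^ 2) + R, ⁅a - a ^ 2 + (c - c ^ 2) + R, x⁆⁆⁆
      = (-9 * (1 - q ^ 2) * (1 - q)) • ⁅a - a ^ 2 + (c - c ^ 2) + R, x⁆ := by
  set B := a - a ^ 2 + (c - c ^ 2)
  have hRB : Commute R B :=
    (hRa.sub_right (hRa.pow_right 2)).add_right (hRc.sub_right (hRc.pow_right 2))
  have hRx₁ := hRB.lie_right hRx
  rw [lie_add_of_commute hRx, lie_add_of_commute hRx₁, lie_add_of_commute (hRB.lie_right hRx₁)]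
  have haB : Commute a B := ((Commute.refl a).sub_right ((Commute.refl a).pow_right 2)).add_right
    (hac.sub_right (hac.pow_right 2))
  have hcB : Commute c B := (hac.symm.sub_right (hac.symm.pow_right 2)).add_right
    ((Commute.refl c).sub_right ((Commute.refl c).pow_right 2))
  refine lie_lie_lie_eq_smul_of_lie_eq_mul (lie_clock_eq_mul hq hax hxc) ?_
    (clock_shift_cube_of_commute hq ha hc hac)
  exact ((haB.smul_left _).add_left ((haB.pow_left 2).smul_left _)).add_left
    ((hcB.smul_left _).add_left ((hcB.pow_left 2).smul_left _))

theorem lie_lie_lie_clock_sq {q : K} (hq : q ^ 3 = 1) {a c x R : A} (ha : a ^ 3 = 1)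
    (hc : c ^ 3 = 1) (hax : a * x = q • (x * a)) (hxc : x * c = q • (c * x)) (hac : Commute a c)
    (hRa : Commute R a) (hRc : Commute R c) (hRx : Commute R x) :
    ⁅a - a ^ 2 + (c - c ^ 2) + R,
        ⁅a - a ^ 2 + (c - c ^ 2) + R, ⁅a - a ^ 2 + (c - c ^ 2) + R, x ^ 2⁆⁆⁆
      = (-9 * (1 - q ^ 2) * (1 - q)) • ⁅a - a ^ 2 + (c - c ^ 2) + R, x ^ 2⁆ := by
  have hax2 : a * x ^ 2 = q ^ 2 • (x ^ 2 * a) := by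
    simpa using pow_mul_pow_eq_smul_of_mul_eq_smul_s8 hax 1 2
  have hx2c : x ^ 2 * c = q ^ 2 • (c * x ^ 2) := by
    simpa using pow_mul_pow_eq_smul_of_mul_eq_smul_s8 hxc 2 1
  have hq2 : (q ^ 2) ^ 3 = 1 := by rw [← pow_mul, pow_mul', hq, one_pow]
  rw [lie_lie_lie_clock hq2 ha hc hax2 hx2c hac hRa hRc (hRx.pow_right 2)]
  congr 1
  linear_combination 9 * q * (1 - q ^ 2) * hq

end Clock

section OddSites

variable {N : ℕ}

theorem two_mul_add_one_ne_two_mul (y z : ZMod (2 * N)) : 2 * y + 1 ≠ 2 * z := fun h => by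
  have h2 := congrArg (ZMod.castHom (dvd_mul_right 2 N) (ZMod 2)) h
  simp only [map_add, map_mul, map_ofNat, map_one, show (2 : ZMod 2) = 0 from rfl] at h2
  simp at h2

theorem injOn_two_mul_natCast_add_one :
    Set.InjOn (fun m : ℕ => 2 * (m : ZMod (2 * N)) + 1) (range N) := by
  intro m hm m' hm' h
  have h2 : ((2 * m : ℕ) : ZMod (2 * N)) = ((2 * m' : ℕ) : ZMod (2 * N)) := by
    push_cast; simpa using h
  simp only [coe_range, Set.mem_Iio] at hm hm'
  rw [ZMod.natCast_eq_natCast_iff', Nat.mod_eq_of_lt (by omega), Nat.mod_eq_of_lt (by omega)] at h2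
  omega

theorem exists_lt_two_mul_natCast_eq [NeZero N] (y : ZMod (2 * N)) :
    ∃ m < N, 2 * (m : ZMod (2 * N)) = 2 * y := by
  refine ⟨y.val % N, Nat.mod_lt _ (NeZero.pos N), ?_⟩
  have h : ((2 * (y.val % N) : ℕ) : ZMod (2 * N)) = ((2 * y.val : ℕ) : ZMod (2 * N)) := by
    rw [ZMod.natCast_eq_natCast_iff', Nat.mul_mod_mul_left, Nat.mul_mod_mul_left, Nat.mod_mod]
  push_cast at h
  rw [h, ZMod.natCast_zmod_val]

theorem exists_sum_odd_sites_eq {M : Type*} [AddCommMonoid M] (hN : 2 ≤ N)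
    (f : ZMod (2 * N) → M) (j : ZMod (2 * N)) :
    ∃ s : Finset (ZMod (2 * N)), (∀ i ∈ s, i ≠ 2 * j - 1 ∧ i ≠ 2 * j + 1 ∧ ∃ y, i = 2 * y + 1) ∧
      ∑ m ∈ range N, f (2 * (m : ZMod (2 * N)) + 1)
        = f (2 * j - 1) + f (2 * j + 1) + ∑ i ∈ s, f i := by
  have : NeZero N := ⟨by omega⟩
  set O := (range N).image (fun m : ℕ => 2 * (m : ZMod (2 * N)) + 1)
  have hO : ∀ y : ZMod (2 * N), 2 * y + 1 ∈ O := fun y => by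
    obtain ⟨m, hm, hmy⟩ := exists_lt_two_mul_natCast_eq y
    exact mem_image.mpr ⟨m, mem_range.mpr hm, by rw [hmy]⟩
  have htwo : (2 : ZMod (2 * N)) ≠ 0 := by
    intro h
    have := Nat.le_of_dvd two_pos ((ZMod.natCast_eq_zero_iff 2 (2 * N)).mp (by exact_mod_cast h))
    omega
  have hlow : 2 * j - 1 ∈ O := by convert hO (j - 1) using 1; ring
  have hhigh : 2 * j + 1 ∈ O.erase (2 * j - 1) :=
    mem_erase.mpr ⟨fun h => htwo (by linear_combination h), hO j⟩
  refine ⟨(O.erase (2 * j - 1)).erase (2 * j + 1), fun i hi => ?_, ?_⟩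
  · obtain ⟨hne_hi, hi'⟩ := mem_erase.mp hi
    obtain ⟨hne_lo, hiO⟩ := mem_erase.mp hi'
    obtain ⟨m, -, rfl⟩ := mem_image.mp hiO
    exact ⟨hne_lo, hne_hi, m, rfl⟩
  · rw [← sum_image injOn_two_mul_natCast_add_one, ← add_sum_erase _ _ hlow,
      ← add_sum_erase _ _ hhigh, add_assoc]

theorem exists_sum_odd_sites_eq_add_add_commute {A : Type*} [Ring A] (hN : 2 ≤ N)
    (η : ZMod (2 * N) → A)
    (hcomm : ∀ j l : ZMod (2 * N), l ≠ j + 1 → l ≠ j - 1 → η j * η l = η l * η j)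
    (f : A → A) (hf : ∀ u v, Commute u v → Commute (f u) v) (j : ZMod (2 * N)) :
    ∃ R : A, ∑ m ∈ range N, f (η (2 * (m : ZMod (2 * N)) + 1))
        = f (η (2 * j - 1)) + f (η (2 * j + 1)) + R ∧
      Commute R (η (2 * j - 1)) ∧ Commute R (η (2 * j)) ∧ Commute R (η (2 * j + 1)) := by
  obtain ⟨s, hs, hsum⟩ := exists_sum_odd_sites_eq hN (fun i => f (η i)) j
  have hodd : ∀ y z : ZMod (2 * N), 2 * y + 1 ≠ 2 * z := two_mul_add_one_ne_two_mul
  refine ⟨_, hsum, ?_, ?_, ?_⟩ <;>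
    refine Commute.sum_left _ _ _ fun i hi => hf _ _ (hcomm _ _ ?_ ?_) <;>
    obtain ⟨hlo, hhi, y, rfl⟩ := hs i hi
  · exact fun h => hodd (j - 1) (y + 1) (by linear_combination h)
  · exact fun h => hodd (j - 1) y (by linear_combination h)
  · exact fun h => hlo (by linear_combination -h)
  · exact fun h => hhi (by linear_combination -h)
  · exact fun h => hodd j (y + 1) (by linear_combination h)
  · exact fun h => hodd j y (by linear_combination h)

end OddSites

/-- key identity in the proof of Theorem 2 of the paper.
Let `k ≥ 1`, `n = 3k`, `ω = exp(2πi/n)`, and let `η_j` (indexed cyclically mod `2N`,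
`N ≥ 2`) satisfy `η_j η_{j+1} = ω η_{j+1} η_j`, `η_j η_k = η_k η_j` for
`k ≢ j ± 1 (mod 2N)`, and `η_j^n = 1`.  With
`A₀ = Σ (η_{2j−1}^k − η_{2j−1}^{n−k})`, `z = 1 − ω^{−k²}` and `z̄ = 1 − ω^{k²}`,
one has `[A₀,[A₀,[A₀, η_{2j}^k]]] = −9 z z̄ [A₀, η_{2j}^k]` and
`[A₀,[A₀,[A₀, η_{2j}^{n−k}]]] = −9 z z̄ [A₀, η_{2j}^{n−k}]` for every `j`. -/
theorem triple_commutator_clock_third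
    (k n : ℕ) (hk1 : 1 ≤ k) (hn : n = 3 * k)
    (N : ℕ) (hN : 2 ≤ N) (A : Type*) [Ring A] [Algebra ℂ A]
    (ω : ℂ) (hω : ω = Complex.exp (2 * Real.pi * Complex.I / n))
    (η : ZMod (2 * N) → A)
    (hanti : ∀ j : ZMod (2 * N), η j * η (j + 1) = ω • (η (j + 1) * η j))
    (hcomm : ∀ j l : ZMod (2 * N), l ≠ j + 1 → l ≠ j - 1 → η j * η l = η l * η j)
    (hpow : ∀ j : ZMod (2 * N), η j ^ n = 1)
    (A₀ : A)
    (hA₀ : A₀ = ∑ j ∈ Finset.range N,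
      (η (2 * (j : ZMod (2 * N)) + 1) ^ k - η (2 * (j : ZMod (2 * N)) + 1) ^ (n - k)))
    (z zbar : ℂ) (hz : z = 1 - (ω ^ (k ^ 2))⁻¹) (hzbar : zbar = 1 - ω ^ (k ^ 2)) :
    ∀ j : ZMod (2 * N),
      ⁅A₀, ⁅A₀, ⁅A₀, η (2 * j) ^ k⁆⁆⁆ = (-9 * z * zbar) • ⁅A₀, η (2 * j) ^ k⁆ ∧
      ⁅A₀, ⁅A₀, ⁅A₀, η (2 * j) ^ (n - k)⁆⁆⁆
        = (-9 * z * zbar) • ⁅A₀, η (2 * j) ^ (n - k)⁆ := by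
  intro j
  set q := ω ^ (k ^ 2)
  have hq : q ^ 3 = 1 := by
    rw [← pow_mul, show k ^ 2 * 3 = n * k by rw [hn]; ring, pow_mul, hω,
      (Complex.isPrimitiveRoot_exp n (by omega)).pow_eq_one, one_pow]
  have hz' : z = 1 - q ^ 2 := by
    rw [hz, inv_eq_of_mul_eq_one_right (by linear_combination hq : q * q ^ 2 = 1)]
  have hnk : n - k = k * 2 := by omega
  set a := η (2 * j - 1) ^ k
  set c := η (2 * j + 1) ^ k
  set x := η (2 * j) ^ k
  obtain ⟨R, hsum, hRa, hRx, hRc⟩ := exists_sum_odd_sites_eq_add_add_commute hN η hcomm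
    (fun u => u ^ k - u ^ (n - k)) (fun u v h => (h.pow_left k).sub_left (h.pow_left _)) j
  have hA : A₀ = a - a ^ 2 + (c - c ^ 2) + R := by
    rw [hA₀, hsum, hnk, pow_mul, pow_mul]
  have hax : a * x = q • (x * a) := by
    rw [pow_mul_pow_eq_smul_of_mul_eq_smul_s8 (by simpa using hanti (2 * j - 1)) k k, ← sq]
  have hxc : x * c = q • (c * x) := by
    rw [pow_mul_pow_eq_smul_of_mul_eq_smul_s8 (hanti (2 * j)) k k, ← sq]
  have hac : Commute a c := by
    refine (Commute.pow_pow (hcomm _ _ (fun h => ?_) (fun h => ?_)) k k)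
    · exact two_mul_add_one_ne_two_mul j j (by linear_combination h)
    · exact two_mul_add_one_ne_two_mul j (j - 1) (by linear_combination h)
  have ha : a ^ 3 = 1 := by rw [← pow_mul, show k * 3 = n by omega, hpow]
  have hc : c ^ 3 = 1 := by rw [← pow_mul, show k * 3 = n by omega, hpow]
  refine ⟨?_, ?_⟩
  · rw [hA, lie_lie_lie_clock hq ha hc hax hxc hac (hRa.pow_right k) (hRc.pow_right k)
      (hRx.pow_right k), hz', hzbar]
  · rw [hA, hnk, pow_mul, lie_lie_lie_clock_sq hq ha hc hax hxc hac (hRa.pow_right k)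
      (hRc.pow_right k) (hRx.pow_right k), hz', hzbar]
end

section
/- Let n ≥ 2 be an integer, ω = exp(2πi/n), and let m be an odd integer with 1 ≤ m ≤ n. Then Σ_{l=1}^{n−1} ω^{((m−1)/2)·l} / (1 − ω^{−l}) = (n − m)/2. -/
/-!
Split each summand as `x ^ k / (1 - x⁻¹) = (x + x ^ 2 + ⋯ + x ^ k) + 1 / (1 - x⁻¹)` with
`x = ω ^ l`. Summed over `l`, each `ω ^ (j l)` with `0 < j < n` contributes `-1`, so the
geometric parts give `-k`. The map `l ↦ n - l` turns `1 / (1 - x⁻¹)` into `1 / (1 - x)`, and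
`1 / (1 - x) + 1 / (1 - x⁻¹) = 1`, so the remaining sum is `(n - 1) / 2`. With `m = 2k + 1`
this is `(n - m) / 2`.
-/

open Finset

section Field

variable {K : Type*} [Field K]

theorem sum_Icc_one_pow_eq_neg_one {y : K} {n : ℕ} (hn : n ≠ 0) (hy : y ≠ 1)
    (hyn : y ^ n = 1) : ∑ l ∈ Icc 1 (n - 1), y ^ l = -1 := by
  have hgeom : ∑ l ∈ range n, y ^ l = 0 := by
    rw [geom_sum_eq hy, hyn, sub_self, zero_div]
  rw [sum_range_eq_add_Ico _ (Nat.pos_of_ne_zero hn), pow_zero] at hgeom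
  rw [Icc_sub_one_right_eq_Ico_of_not_isMin (by simpa using hn)]
  linear_combination hgeom

theorem one_div_one_sub_add_one_div_one_sub_inv {x : K} (hx0 : x ≠ 0) (hx1 : x ≠ 1) :
    1 / (1 - x) + 1 / (1 - x⁻¹) = 1 := by
  have h : 1 - x ≠ 0 := sub_ne_zero.mpr hx1.symm
  have h' : x - 1 ≠ 0 := sub_ne_zero.mpr hx1
  field_simp
  ring

theorem pow_div_one_sub_inv_eq_sum_add {x : K} (hx0 : x ≠ 0) (hx1 : x ≠ 1) (k : ℕ) :
    x ^ k / (1 - x⁻¹) = ∑ j ∈ range k, x ^ (j + 1) + 1 / (1 - x⁻¹) := by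
  have h' : x - 1 ≠ 0 := sub_ne_zero.mpr hx1
  simp_rw [pow_succ, ← sum_mul, geom_sum_eq hx1]
  field_simp
  ring

end Field

theorem sum_Icc_one_apply_inv_pow_of_pow_eq_one {M β : Type*} [DivisionMonoid M]
    [AddCommMonoid β] {ζ : M} {n : ℕ} (hζ : ζ ^ n = 1) (f : M → β) :
    ∑ l ∈ Icc 1 (n - 1), f (ζ ^ l)⁻¹ = ∑ l ∈ Icc 1 (n - 1), f (ζ ^ l) := by
  refine sum_nbij' (n - ·) (n - ·) ?_ ?_ ?_ ?_ ?_ <;> intro l hl <;>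
    simp only [mem_Icc] at hl ⊢
  · omega
  · omega
  · omega
  · omega
  · rw [inv_eq_of_mul_eq_one_right (b := ζ ^ (n - l))]
    rw [← pow_add, Nat.add_sub_cancel' (by omega), hζ]

namespace IsPrimitiveRoot

variable {K : Type*} [Field K] {ζ : K} {n : ℕ} (hζ : IsPrimitiveRoot ζ n)
include hζ

theorem pow_ne_zero_of_mem_Icc {l : ℕ} (hl : l ∈ Icc 1 (n - 1)) : ζ ^ l ≠ 0 := by
  rw [mem_Icc] at hl
  exact pow_ne_zero l (hζ.ne_zero (by omega))

theorem pow_ne_one_of_mem_Icc {l : ℕ} (hl : l ∈ Icc 1 (n - 1)) : ζ ^ l ≠ 1 := by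
  rw [mem_Icc] at hl
  exact hζ.pow_ne_one_of_pos_of_lt (by omega) (by omega)

theorem sum_Icc_one_pow_mul_eq_neg_one {j : ℕ} (hj0 : j ≠ 0) (hjn : j < n) :
    ∑ l ∈ Icc 1 (n - 1), ζ ^ (j * l) = -1 := by
  simp_rw [pow_mul]
  exact sum_Icc_one_pow_eq_neg_one (by omega) (hζ.pow_ne_one_of_pos_of_lt hj0 hjn)
    (by rw [← pow_mul, mul_comm, pow_mul, hζ.pow_eq_one, one_pow])

theorem two_mul_sum_Icc_one_div_one_sub_inv_pow :
    2 * ∑ l ∈ Icc 1 (n - 1), 1 / (1 - (ζ ^ l)⁻¹) = (n - 1 : ℕ) := by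
  have hpair : ∑ l ∈ Icc 1 (n - 1), (1 / (1 - ζ ^ l) + 1 / (1 - (ζ ^ l)⁻¹)) = (n - 1 : ℕ) := by
    rw [sum_congr rfl fun l hl => one_div_one_sub_add_one_div_one_sub_inv
      (hζ.pow_ne_zero_of_mem_Icc hl) (hζ.pow_ne_one_of_mem_Icc hl)]
    simp only [sum_const, Nat.card_Icc, add_tsub_cancel_right, nsmul_eq_mul, mul_one]
  rw [sum_add_distrib,
    ← sum_Icc_one_apply_inv_pow_of_pow_eq_one hζ.pow_eq_one (fun x => 1 / (1 - x))] at hpair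
  linear_combination hpair

theorem two_mul_sum_Icc_one_pow_mul_div_one_sub_inv_pow {k : ℕ} (hk : k < n) :
    2 * ∑ l ∈ Icc 1 (n - 1), ζ ^ (k * l) / (1 - (ζ ^ l)⁻¹) = n - 1 - 2 * k := by
  have hsplit : ∀ l ∈ Icc 1 (n - 1), ζ ^ (k * l) / (1 - (ζ ^ l)⁻¹)
      = ∑ j ∈ range k, ζ ^ ((j + 1) * l) + 1 / (1 - (ζ ^ l)⁻¹) := fun l hl => by
    simp_rw [mul_comm _ l, pow_mul]
    exact pow_div_one_sub_inv_eq_sum_add (hζ.pow_ne_zero_of_mem_Icc hl)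
      (hζ.pow_ne_one_of_mem_Icc hl) k
  rw [sum_congr rfl hsplit, sum_add_distrib, sum_comm,
    sum_congr rfl fun j hj => hζ.sum_Icc_one_pow_mul_eq_neg_one j.succ_ne_zero
      (by rw [mem_range] at hj; omega),
    sum_const, card_range, mul_add, hζ.two_mul_sum_Icc_one_div_one_sub_inv_pow,
    Nat.cast_sub (by omega : 1 ≤ n), nsmul_eq_mul, Nat.cast_one]
  ring

end IsPrimitiveRoot

theorem sum_formula_one_general
    (n : ℕ)
    (ω : ℂ) (hω : ω = Complex.exp (2 * Real.pi * Complex.I / n))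
    (m : ℕ) (hmn : m ≤ n) (hmodd : Odd m) :
    ∑ l ∈ Finset.Icc 1 (n - 1), ω ^ (((m - 1) / 2) * l) / (1 - (ω ^ l)⁻¹)
      = ((n : ℂ) - (m : ℂ)) / 2 := by
  obtain ⟨k, rfl⟩ := hmodd
  have hprim : IsPrimitiveRoot ω n := hω ▸ Complex.isPrimitiveRoot_exp n (by omega)
  rw [show (2 * k + 1 - 1) / 2 = k by omega, eq_div_iff two_ne_zero, mul_comm,
    hprim.two_mul_sum_Icc_one_pow_mul_div_one_sub_inv_pow (by omega)]
  push_cast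
  ring

/-- first summation formula, eq. (34) of the paper.
For `n ≥ 2`, `ω = exp(2πi/n)`, and `m` odd with `1 ≤ m ≤ n`,
`Σ_{l=1}^{n−1} ω^{((m−1)/2)·l} / (1 − ω^{−l}) = (n − m)/2`. -/
theorem sum_formula_one
    (n : ℕ) (hn : 2 ≤ n)
    (ω : ℂ) (hω : ω = Complex.exp (2 * Real.pi * Complex.I / n))
    (m : ℕ) (hm1 : 1 ≤ m) (hmn : m ≤ n) (hmodd : Odd m) :
    ∑ l ∈ Finset.Icc 1 (n - 1), ω ^ (((m - 1) / 2) * l) / (1 - (ω ^ l)⁻¹)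
      = ((n : ℂ) - (m : ℂ)) / 2 :=
  sum_formula_one_general n ω hω m hmn hmodd
end

section
/- Let n ≥ 2 be an integer, ω = exp(2πi/n), and let m be an odd integer with 1 ≤ m ≤ n. Then Σ_{l=1}^{n−1} ω^{−((m+1)/2)·l} / (1 − ω^{−l}) = −(n − m)/2. -/
open Finset

private lemma pair_sum_aux (x : ℂ) (hx0 : x ≠ 0) (hx1 : x ≠ 1) :
    (1 - x)⁻¹ + (1 - x⁻¹)⁻¹ = 1 := by
  have h1 : (1 : ℂ) - x ≠ 0 := sub_ne_zero.mpr (Ne.symm hx1)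
  have h1' : x - 1 ≠ 0 := sub_ne_zero.mpr hx1
  have e : (1 - x⁻¹)⁻¹ = x / (x - 1) := by
    rw [show (1 : ℂ) - x⁻¹ = (x - 1) / x by field_simp, inv_div]
  rw [e, inv_eq_one_div, div_add_div _ _ h1 h1',
    div_eq_one_iff_eq (mul_ne_zero h1 h1')]
  ring

private lemma cast_pred (n : ℕ) (hn : 1 ≤ n) : ((n - 1 : ℕ) : ℂ) = (n : ℂ) - 1 := by
  rw [Nat.cast_sub hn]; norm_num

private lemma sum_inv_one_sub (n : ℕ) (hn : 2 ≤ n) (ζ : ℂ) (hζ : IsPrimitiveRoot ζ n) :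
    ∑ l ∈ Finset.Icc 1 (n - 1), (1 - ζ ^ l)⁻¹ = ((n : ℂ) - 1) / 2 := by
  have hz0 : ζ ≠ 0 := hζ.ne_zero (by omega)
  have hne : ∀ l ∈ Finset.Icc 1 (n - 1), ζ ^ l ≠ 1 := by
    intro l hl
    simp only [Finset.mem_Icc] at hl
    exact hζ.pow_ne_one_of_pos_of_lt (by omega) (by omega)
  have hinv : ∀ l, 1 ≤ l → l ≤ n - 1 → ζ ^ (n - l) = (ζ ^ l)⁻¹ := by
    intro l h1 h2
    have h : ζ ^ (n - l) * ζ ^ l = 1 := by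
      rw [← pow_add, show n - l + l = n by omega, hζ.pow_eq_one]
    exact eq_inv_of_mul_eq_one_left h
  have key : ∑ l ∈ Finset.Icc 1 (n - 1), (1 - ζ ^ l)⁻¹
      = ∑ l ∈ Finset.Icc 1 (n - 1), (1 - (ζ ^ l)⁻¹)⁻¹ := by
    apply Finset.sum_nbij' (fun l => n - l) (fun l => n - l)
    · intro a ha; simp only [Finset.mem_Icc] at *; omega
    · intro a ha; simp only [Finset.mem_Icc] at *; omega
    · intro a ha; simp only [Finset.mem_Icc] at ha; omega
    · intro a ha; simp only [Finset.mem_Icc] at ha; omega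
    · intro a ha
      simp only [Finset.mem_Icc] at ha
      have h := hinv (n - a) (by omega) (by omega)
      rw [show n - (n - a) = a by omega] at h
      rw [h]
  have h2 : (2 : ℂ) * ∑ l ∈ Finset.Icc 1 (n - 1), (1 - ζ ^ l)⁻¹ = (n : ℂ) - 1 := by
    rw [two_mul]
    nth_rewrite 2 [key]
    rw [← Finset.sum_add_distrib]
    rw [Finset.sum_congr rfl (fun l hl => pair_sum_aux (ζ ^ l) (pow_ne_zero l hz0) (hne l hl))]
    rw [Finset.sum_const, Nat.card_Icc, show n - 1 + 1 - 1 = n - 1 by omega]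
    rw [nsmul_eq_mul, mul_one, cast_pred n (by omega)]
  field_simp at h2 ⊢
  linear_combination h2

private lemma sum_pow_eq_neg_one (n : ℕ) (hn : 2 ≤ n) (x : ℂ) (hx1 : x ≠ 1)
    (hxn : x ^ n = 1) : ∑ l ∈ Finset.Icc 1 (n - 1), x ^ l = -1 := by
  have h : ∑ l ∈ Finset.range n, x ^ l = 0 := by
    rw [geom_sum_eq hx1, hxn]; simp
  have hIcc : Finset.Icc 1 (n - 1) = Finset.Ico 1 n := by
    rw [← Finset.Ico_add_one_right_eq_Icc]; congr 1; omega
  rw [Finset.range_eq_Ico,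
    Finset.sum_eq_sum_Ico_succ_bot (show 0 < n by omega) (fun l => x ^ l)] at h
  simp only [pow_zero] at h
  rw [hIcc]
  linear_combination h

private lemma term_identity (x : ℂ) (hx1 : x ≠ 1) (k : ℕ) :
    x ^ k / (1 - x) = (1 - x)⁻¹ - ∑ j ∈ Finset.range k, x ^ j := by
  have h1 : (1 : ℂ) - x ≠ 0 := sub_ne_zero.mpr (Ne.symm hx1)
  have hgs := geom_sum_mul x k
  field_simp
  linear_combination -hgs

private lemma inv_pow_mul (ω : ℂ) (k l : ℕ) : (ω ^ (k * l))⁻¹ = ((ω⁻¹) ^ l) ^ k := by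
  rw [← pow_mul, inv_pow, mul_comm l k]

/-- second summation formula, eq. (34) of the paper.
For `n ≥ 2`, `ω = exp(2πi/n)`, and `m` odd with `1 ≤ m ≤ n`,
`Σ_{l=1}^{n−1} ω^{−((m+1)/2)·l} / (1 − ω^{−l}) = −(n − m)/2`. -/
theorem sum_formula_two
    (n : ℕ) (hn : 2 ≤ n)
    (ω : ℂ) (hω : ω = Complex.exp (2 * Real.pi * Complex.I / n))
    (m : ℕ) (hm1 : 1 ≤ m) (hmn : m ≤ n) (hmodd : Odd m) :
    ∑ l ∈ Finset.Icc 1 (n - 1), (ω ^ (((m + 1) / 2) * l))⁻¹ / (1 - (ω ^ l)⁻¹)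
      = -(((n : ℂ) - (m : ℂ)) / 2) := by
  obtain ⟨t, ht⟩ := hmodd
  set k := (m + 1) / 2 with hk
  have hkt : k = t + 1 := by omega
  have hωprim : IsPrimitiveRoot ω n := by
    rw [hω]; exact Complex.isPrimitiveRoot_exp n (by omega)
  set ζ := ω⁻¹ with hζdef
  have hζ : IsPrimitiveRoot ζ n := hωprim.inv
  have hzn : ζ ^ n = 1 := hζ.pow_eq_one
  have hne : ∀ l, 1 ≤ l → l ≤ n - 1 → ζ ^ l ≠ 1 := fun l h1 h2 =>
    hζ.pow_ne_one_of_pos_of_lt (by omega) (by omega)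
  have step1 : ∑ l ∈ Finset.Icc 1 (n - 1), (ω ^ (k * l))⁻¹ / (1 - (ω ^ l)⁻¹)
      = ∑ l ∈ Finset.Icc 1 (n - 1), ((1 - ζ ^ l)⁻¹ - ∑ j ∈ Finset.range k, (ζ ^ l) ^ j) := by
    apply Finset.sum_congr rfl
    intro l hl
    simp only [Finset.mem_Icc] at hl
    have hx1 : ζ ^ l ≠ 1 := hne l hl.1 hl.2
    have e1 : (ω ^ (k * l))⁻¹ = (ζ ^ l) ^ k := inv_pow_mul ω k l
    have e2 : (ω ^ l)⁻¹ = ζ ^ l := (inv_pow ω l).symm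
    rw [e1, e2, term_identity _ hx1]
  rw [step1, Finset.sum_sub_distrib, sum_inv_one_sub n hn ζ hζ]
  rw [Finset.sum_comm]
  have inner : ∀ j ∈ Finset.range k, ∑ l ∈ Finset.Icc 1 (n - 1), (ζ ^ l) ^ j
      = if j = 0 then ((n : ℂ) - 1) else -1 := by
    intro j hj
    simp only [Finset.mem_range] at hj
    by_cases hj0 : j = 0
    · simp only [hj0, pow_zero, Finset.sum_const, nsmul_eq_mul, mul_one, if_true,
        Nat.card_Icc, show n - 1 + 1 - 1 = n - 1 by omega]
      exact cast_pred n (by omega)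
    · rw [if_neg hj0]
      have hjn : j < n := by omega
      have hx1 : ζ ^ j ≠ 1 := hζ.pow_ne_one_of_pos_of_lt (by omega) hjn
      have hxn : (ζ ^ j) ^ n = 1 := by rw [← pow_mul, mul_comm, pow_mul, hzn, one_pow]
      calc ∑ l ∈ Finset.Icc 1 (n - 1), (ζ ^ l) ^ j
          = ∑ l ∈ Finset.Icc 1 (n - 1), (ζ ^ j) ^ l := by
            apply Finset.sum_congr rfl; intro l _; rw [← pow_mul, ← pow_mul, mul_comm]
        _ = -1 := sum_pow_eq_neg_one n hn (ζ ^ j) hx1 hxn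
  rw [Finset.sum_congr rfl inner]
  rw [hkt, Finset.sum_range_succ']
  simp only [Nat.succ_ne_zero, if_neg (Nat.succ_ne_zero _), if_pos rfl, Finset.sum_const,
    Finset.card_range, nsmul_eq_mul, mul_neg, mul_one, if_true, if_false]
  have hmc : (m : ℂ) = 2 * t + 1 := by push_cast [ht]; ring
  rw [hmc]
  ring
end

section
/- Let n ≥ 2, ω = exp(2πi/n), and for an integer k define Δ_k(x) = Σ_{l=1}^{n−1} ((1 − ω^{−kl})/(1 − ω^{−l})) · x^l for a complex number x. Then for every k with 1 ≤ k ≤ n−1 and all x, y ∈ {1, ω, ω², …, ω^{n−1}}, the quantity Δ_k(x, y) := Δ_k(x) + Δ_{−k}(y) takes one of the values n, 0, or −n; in particular Δ_k(x, y)³ = n² · Δ_k(x, y). -/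
/-!
For a primitive `n`-th root of unity `ζ` and `1 ≤ l ≤ n - 1`, the coefficient
`(1 - ζ^(-kl)) / (1 - ζ^(-l))` is the geometric sum `∑_{j<k} ζ^(-jl)`, and that of `Δ_{-k}` is
`-∑_{j<k} ζ^((j+1)l)`. Exchanging the sums and using `∑_{l=1}^{n-1} z^l = n·[z = 1] - 1` for
`n`-th roots of unity `z` gives `Δ_k(ζ^s) = n·a - k` and `Δ_{-k}(ζ^t) = k - n·b`, where `a` and
`b` count the `j < k` with `ζ^j = ζ^s`, resp. `ζ^j = ζ^(-t-1)`. As `k ≤ n` and `ζ` has order `n`,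
both counts are `0` or `1`, so `Δ_k(x, y) = n·(a - b) ∈ {n, 0, -n}`.
-/

open Finset

section GeomSum

variable {K : Type*} [Field K] {x : K}

theorem one_sub_pow_div_one_sub (hx : x ≠ 1) (k : ℕ) :
    (1 - x ^ k) / (1 - x) = ∑ j ∈ range k, x ^ j := by
  simpa using (geom_sum_Ico' hx (Nat.zero_le k)).symm

theorem one_sub_pow_div_one_sub_inv (hx₀ : x ≠ 0) (hx : x ≠ 1) (k : ℕ) :
    (1 - x ^ k) / (1 - x⁻¹) = -∑ j ∈ range k, x ^ (j + 1) := by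
  have hx' : 1 - x ≠ 0 := sub_ne_zero.2 hx.symm
  simp only [pow_succ, ← sum_mul, ← one_sub_pow_div_one_sub hx]
  field_simp
  ring

theorem sum_Icc_pow_of_pow_eq_one [DecidableEq K] {n : ℕ} (hn : 0 < n) (hx : x ^ n = 1) :
    ∑ l ∈ Icc 1 (n - 1), x ^ l = n * (if x = 1 then 1 else 0) - 1 := by
  have hIcc : Icc 1 (n - 1) = (range n).erase 0 := by
    ext l
    simp only [mem_Icc, mem_erase, mem_range]
    omega
  rw [hIcc, sum_erase_eq_sub (mem_range.2 hn), pow_zero]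
  split_ifs with h
  · simp [h]
  · simp [geom_sum_eq h, hx]

end GeomSum

noncomputable def delta {K : Type*} [Field K] (ζ : K) (n : ℕ) (k : ℤ) (x : K) : K :=
  ∑ l ∈ Icc 1 (n - 1), ((1 - ζ ^ (-(k * (l : ℤ)))) / (1 - ζ ^ (-(l : ℤ)))) * x ^ l

namespace IsPrimitiveRoot

variable {K : Type*} [Field K] [DecidableEq K] {ζ : K} {n : ℕ}

theorem card_filter_pow_eq_le_one (hζ : IsPrimitiveRoot ζ n) {k : ℕ} (hk : k ≤ n) (a : K) :
    #{j ∈ range k | ζ ^ j = a} ≤ 1 := by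
  refine card_le_one.2 fun i hi j hj => ?_
  simp only [mem_filter, mem_range] at hi hj
  exact hζ.pow_inj (by omega) (by omega) (hi.2.trans hj.2.symm)

theorem delta_natCast_pow (hζ : IsPrimitiveRoot ζ n) (hn : 0 < n) (k s : ℕ) :
    delta ζ n k (ζ ^ s) = n * #{j ∈ range k | ζ ^ j = ζ ^ s} - k := by
  have hζ₀ : ζ ≠ 0 := hζ.ne_zero hn.ne'
  calc delta ζ n k (ζ ^ s)
      = ∑ l ∈ Icc 1 (n - 1), ∑ j ∈ range k, (ζ ^ s / ζ ^ j) ^ l := by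
        refine sum_congr rfl fun l hl => ?_
        have hl1 : (ζ ^ l)⁻¹ ≠ 1 := inv_ne_one.2 <|
          hζ.pow_ne_one_of_pos_of_lt (by simp at hl; omega) (by simp at hl; omega)
        rw [zpow_neg, zpow_neg, ← Nat.cast_mul, zpow_natCast, zpow_natCast, pow_mul',
          ← inv_pow, one_sub_pow_div_one_sub hl1, sum_mul]
        refine sum_congr rfl fun j _ => ?_
        ring
    _ = ∑ j ∈ range k, ((n : K) * (if ζ ^ j = ζ ^ s then 1 else 0) - 1) := by
        rw [sum_comm]
        refine sum_congr rfl fun j _ => ?_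
        have hpow : (ζ ^ s / ζ ^ j) ^ n = 1 := by
          rw [div_pow, ← pow_mul, ← pow_mul, pow_mul', pow_mul', hζ.pow_eq_one, one_pow, one_pow,
            div_one]
        rw [sum_Icc_pow_of_pow_eq_one hn hpow]
        simp only [div_eq_one_iff_eq (pow_ne_zero _ hζ₀), @eq_comm _ (ζ ^ s)]
    _ = n * #{j ∈ range k | ζ ^ j = ζ ^ s} - k := by
        rw [sum_sub_distrib, ← mul_sum, sum_boole]
        simp

theorem delta_neg_natCast_pow (hζ : IsPrimitiveRoot ζ n) (hn : 0 < n) (k t : ℕ) :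
    delta ζ n (-k) (ζ ^ t) = k - n * #{j ∈ range k | ζ ^ j = (ζ ^ (t + 1))⁻¹} := by
  have hζ₀ : ζ ≠ 0 := hζ.ne_zero hn.ne'
  calc delta ζ n (-k) (ζ ^ t)
      = -∑ l ∈ Icc 1 (n - 1), ∑ j ∈ range k, (ζ ^ j * ζ ^ (t + 1)) ^ l := by
        rw [delta, ← sum_neg_distrib]
        refine sum_congr rfl fun l hl => ?_
        have hl1 : ζ ^ l ≠ 1 :=
          hζ.pow_ne_one_of_pos_of_lt (by simp at hl; omega) (by simp at hl; omega)
        rw [neg_mul, neg_neg, zpow_neg, ← Nat.cast_mul, zpow_natCast, zpow_natCast, pow_mul',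
          one_sub_pow_div_one_sub_inv (pow_ne_zero _ hζ₀) hl1, neg_mul, sum_mul]
        congr 1
        refine sum_congr rfl fun j _ => ?_
        ring
    _ = -∑ j ∈ range k, ((n : K) * (if ζ ^ j = (ζ ^ (t + 1))⁻¹ then 1 else 0) - 1) := by
        rw [sum_comm]
        congr 1
        refine sum_congr rfl fun j _ => ?_
        have hpow : (ζ ^ j * ζ ^ (t + 1)) ^ n = 1 := by
          rw [mul_pow, ← pow_mul, ← pow_mul, pow_mul', pow_mul', hζ.pow_eq_one, one_pow, one_pow,
            mul_one]
        rw [sum_Icc_pow_of_pow_eq_one hn hpow]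
        simp only [mul_eq_one_iff_eq_inv₀ (pow_ne_zero _ hζ₀)]
    _ = k - n * #{j ∈ range k | ζ ^ j = (ζ ^ (t + 1))⁻¹} := by
        rw [sum_sub_distrib, ← mul_sum, sum_boole]
        simp

end IsPrimitiveRoot

/-- the key cubic identity in the proof of Theorem 3 of the
paper.  With `n ≥ 2`, `ω = exp(2πi/n)` and
`Δ_k(x) = Σ_{l=1}^{n−1} ((1 − ω^{−kl})/(1 − ω^{−l})) x^l`, for every `k` with
`1 ≤ k ≤ n−1` and all `x, y` in `{1, ω, ω², …, ω^{n−1}}`, the quantity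
`Δ_k(x, y) := Δ_k(x) + Δ_{−k}(y)` takes one of the values `n`, `0`, `−n`;
in particular `Δ_k(x, y)³ = n² · Δ_k(x, y)`. -/
theorem delta_cubic_identity
    (n : ℕ) (hn : 2 ≤ n)
    (ω : ℂ) (hω : ω = Complex.exp (2 * Real.pi * Complex.I / n))
    (Δ : ℤ → ℂ → ℂ)
    (hΔ : ∀ (k : ℤ) (x : ℂ), Δ k x = ∑ l ∈ Finset.Icc 1 (n - 1),
      ((1 - ω ^ (-(k * (l : ℤ)))) / (1 - ω ^ (-(l : ℤ)))) * x ^ l) :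
    ∀ k : ℕ, 1 ≤ k → k ≤ n - 1 → ∀ x y : ℂ,
      (∃ s : ℕ, s ≤ n - 1 ∧ x = ω ^ s) → (∃ t : ℕ, t ≤ n - 1 ∧ y = ω ^ t) →
      (Δ (k : ℤ) x + Δ (-(k : ℤ)) y = (n : ℂ) ∨
       Δ (k : ℤ) x + Δ (-(k : ℤ)) y = 0 ∨
       Δ (k : ℤ) x + Δ (-(k : ℤ)) y = -(n : ℂ)) ∧
      (Δ (k : ℤ) x + Δ (-(k : ℤ)) y) ^ 3
        = (n : ℂ) ^ 2 * (Δ (k : ℤ) x + Δ (-(k : ℤ)) y) := by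
  obtain rfl : Δ = delta ω n := funext fun k => funext (hΔ k)
  have hζ : IsPrimitiveRoot ω n := hω ▸ Complex.isPrimitiveRoot_exp n (by omega)
  rintro k - hk x y ⟨s, -, rfl⟩ ⟨t, -, rfl⟩
  rw [hζ.delta_natCast_pow (by omega), hζ.delta_neg_natCast_pow (by omega)]
  have ha := hζ.card_filter_pow_eq_le_one (k := k) (by omega) (ω ^ s)
  have hb := hζ.card_filter_pow_eq_le_one (k := k) (by omega) (ω ^ (t + 1))⁻¹
  generalize #{j ∈ range k | ω ^ j = ω ^ s} = a at ha ⊢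
  generalize #{j ∈ range k | ω ^ j = (ω ^ (t + 1))⁻¹} = b at hb ⊢
  rw [show (n * a - k + (k - n * b) : ℂ) = n * ((a : ℂ) - b) by ring]
  interval_cases a <;> interval_cases b <;> simp <;> ring
end

section
/- Let M ≥ 2 and let η_0, η_1, …, η_M be elements of an associative unital ℂ-algebra satisfying: η_j η_{j+1} = −η_{j+1} η_j for 0 ≤ j ≤ M−1; η_j η_k = η_k η_j for 0 ≤ j < k ≤ M with k − j > 1; η_j² = 1 for 1 ≤ j ≤ M; and η_0² = −1. Define φ_j = (1/√2) · exp(iπ(j−1)/2) · η_0 η_1 ⋯ η_j for 0 ≤ j ≤ M−1. Then the φ_j satisfy the canonical anticommutation relations φ_j φ_k + φ_k φ_j = δ_{jk}·1 for all 0 ≤ j, k ≤ M−1, and moreover (−2i) φ_j φ_{j+1} = η_{j+1} for 0 ≤ j ≤ M−2. -/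
/-!
Write `P_j = η_0 η_1 ⋯ η_j`. The generator `η_{j+1}` anticommutes with `P_j`, while every `η_m`
with `m ≥ j + 2` commutes with it. Hence `P_{j+1}² = P_j η_{j+1} P_j η_{j+1} = -P_j²`, so
`P_j² = (-1)^(j+1)`, and for `j < k` the factorisation `P_k = P_j η_{j+1} ⋯ η_k` shows that `P_j`
and `P_k` anticommute. The prefactor of `φ_j` equals `-i^(j+1)/√2`, whose square times `(-1)^(j+1)`
is `1/2`; together with `P_j P_{j+1} = P_j² η_{j+1}` this gives both claims.
-/

open Complex

section ChainProd

variable {A : Type*} [Ring A] (η : ℕ → A) {n : ℕ}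

def chainProd (j : ℕ) : A := ((List.range (j + 1)).map η).prod

lemma chainProd_zero : chainProd η 0 = η 0 := by simp [chainProd]

lemma chainProd_succ (j : ℕ) : chainProd η (j + 1) = chainProd η j * η (j + 1) :=
  List.prod_range_succ η (j + 1)

lemma Commute.chainProd_left {x : A} {j : ℕ} (h : ∀ i ≤ j, Commute (η i) x) :
    Commute (chainProd η j) x := by
  refine Commute.list_prod_left _ _ ?_
  simp only [List.mem_map, List.mem_range]
  rintro _ ⟨i, hi, rfl⟩
  exact h i (by omega)

lemma succ_mul_chainProd (hanti : ∀ i < n, η i * η (i + 1) = -(η (i + 1) * η i))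
    (hcomm : ∀ i k, i + 1 < k → k ≤ n → Commute (η i) (η k)) {j : ℕ} (hj : j < n) :
    η (j + 1) * chainProd η j = -(chainProd η j * η (j + 1)) := by
  cases j with
  | zero => rw [chainProd_zero, (neg_eq_iff_eq_neg.mpr (hanti 0 hj)).symm]
  | succ j =>
    have hc : Commute (chainProd η j) (η (j + 2)) :=
      Commute.chainProd_left η fun i hi => hcomm i (j + 2) (by omega) hj
    rw [chainProd_succ, ← mul_assoc, ← hc.eq, mul_assoc,
      (neg_eq_iff_eq_neg.mpr (hanti (j + 1) hj)).symm, mul_neg, mul_assoc]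

lemma chainProd_mul_self (hanti : ∀ i < n, η i * η (i + 1) = -(η (i + 1) * η i))
    (hcomm : ∀ i k, i + 1 < k → k ≤ n → Commute (η i) (η k))
    (hsq0 : η 0 ^ 2 = -1) (hsq : ∀ i, 1 ≤ i → i ≤ n → η i ^ 2 = 1) {j : ℕ} (hj : j ≤ n) :
    chainProd η j * chainProd η j = (-1) ^ (j + 1) := by
  induction j with
  | zero => rw [chainProd_zero, ← sq, hsq0, zero_add, pow_one]
  | succ j ih =>
    calc chainProd η (j + 1) * chainProd η (j + 1)
        = chainProd η j * (η (j + 1) * chainProd η j) * η (j + 1) := by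
          simp only [chainProd_succ, mul_assoc]
      _ = -(chainProd η j * chainProd η j * η (j + 1) ^ 2) := by
          rw [succ_mul_chainProd η hanti hcomm hj]; noncomm_ring
      _ = (-1) ^ (j + 2) := by
          rw [ih (by omega), hsq (j + 1) (by omega) hj, mul_one, pow_succ _ (j + 1), mul_neg_one]

lemma chainProd_mul_chainProd_of_lt (hanti : ∀ i < n, η i * η (i + 1) = -(η (i + 1) * η i))
    (hcomm : ∀ i k, i + 1 < k → k ≤ n → Commute (η i) (η k)) {j k : ℕ} (hjk : j < k)
    (hk : k ≤ n) :
    chainProd η j * chainProd η k = -(chainProd η k * chainProd η j) := by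
  induction k, hjk using Nat.le_induction with
  | base =>
    rw [chainProd_succ, mul_assoc, succ_mul_chainProd η hanti hcomm hk]
    noncomm_ring
  | succ k hjk ih =>
    have hc : Commute (chainProd η j) (η (k + 1)) :=
      Commute.chainProd_left η fun i hi => hcomm i (k + 1) (by omega) hk
    rw [chainProd_succ, ← mul_assoc, ih (by omega), mul_assoc, ← hc.eq]
    noncomm_ring

end ChainProd

lemma neg_one_pow_mul_self {R : Type*} [Monoid R] [HasDistribNeg R] (n : ℕ) :
    (-1 : R) ^ n * (-1) ^ n = 1 := by
  rw [← pow_add, ← two_mul, pow_mul, neg_one_sq, one_pow]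

noncomputable def jordanWignerCoeff (j : ℕ) : ℂ :=
  (Real.sqrt 2 : ℂ)⁻¹ * exp (I * Real.pi * ((j : ℂ) - 1) / 2)

lemma exp_I_pi_mul_sub_one_div_two (j : ℕ) :
    exp (I * Real.pi * ((j : ℂ) - 1) / 2) = -I * I ^ j := by
  rw [show I * Real.pi * ((j : ℂ) - 1) / 2 = j * (Real.pi / 2 * I) - Real.pi / 2 * I by ring,
    exp_sub, exp_nat_mul, exp_pi_div_two_mul_I, div_I]
  ring

lemma inv_sqrt_two_sq : ((Real.sqrt 2 : ℂ)⁻¹) ^ 2 = 1 / 2 := by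
  rw [inv_pow, ← ofReal_pow, Real.sq_sqrt zero_le_two]; norm_num

lemma jordanWignerCoeff_mul_self (j : ℕ) :
    jordanWignerCoeff j * jordanWignerCoeff j * (-1) ^ (j + 1) = 1 / 2 := by
  calc jordanWignerCoeff j * jordanWignerCoeff j * (-1) ^ (j + 1)
      = (Real.sqrt 2 : ℂ)⁻¹ ^ 2 * I ^ 2 * (I ^ j) ^ 2 * (-1) ^ (j + 1) := by
        rw [jordanWignerCoeff, exp_I_pi_mul_sub_one_div_two]; ring
    _ = 1 / 2 * ((-1) ^ j * (-1) ^ j) := by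
        rw [inv_sqrt_two_sq, I_sq, ← pow_mul, mul_comm j, pow_mul, I_sq]; ring
    _ = 1 / 2 := by rw [neg_one_pow_mul_self, mul_one]

lemma neg_two_I_mul_jordanWignerCoeff_mul_succ (j : ℕ) :
    -2 * I * jordanWignerCoeff j * jordanWignerCoeff (j + 1) * (-1) ^ (j + 1) = 1 := by
  calc -2 * I * jordanWignerCoeff j * jordanWignerCoeff (j + 1) * (-1) ^ (j + 1)
      = -2 * (Real.sqrt 2 : ℂ)⁻¹ ^ 2 * (I ^ 2) ^ 2 * (I ^ j) ^ 2 * (-1) ^ (j + 1) := by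
        simp only [jordanWignerCoeff, exp_I_pi_mul_sub_one_div_two]; ring
    _ = (-1) ^ j * (-1) ^ j := by
        rw [inv_sqrt_two_sq, ← pow_mul I j, mul_comm j, pow_mul, I_sq]; ring
    _ = 1 := neg_one_pow_mul_self j

theorem jordan_wigner_generalization_general
    (M : ℕ) (A : Type*) [Ring A] [Algebra ℂ A]
    (η : ℕ → A)
    (hanti : ∀ j : ℕ, j ≤ M - 1 → η j * η (j + 1) = -(η (j + 1) * η j))
    (hcomm : ∀ j k : ℕ, j < k → k ≤ M → 1 < k - j → η j * η k = η k * η j)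
    (hsq : ∀ j : ℕ, 1 ≤ j → j ≤ M → η j ^ 2 = 1)
    (hsq0 : η 0 ^ 2 = -1)
    (φ : ℕ → A)
    (hφ : ∀ j : ℕ, φ j = (((Real.sqrt 2 : ℂ))⁻¹ *
      Complex.exp (Complex.I * (Real.pi : ℂ) * ((j : ℂ) - 1) / 2)) •
      ((List.range (j + 1)).map η).prod) :
    (∀ j k : ℕ, j ≤ M - 1 → k ≤ M - 1 →
      φ j * φ k + φ k * φ j = if j = k then (1 : A) else 0) ∧
    (∀ j : ℕ, j ≤ M - 2 → (-2 * Complex.I) • (φ j * φ (j + 1)) = η (j + 1)) := by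
  have hanti' : ∀ i < M, η i * η (i + 1) = -(η (i + 1) * η i) := fun i hi => hanti i (by omega)
  have hcomm' : ∀ i k, i + 1 < k → k ≤ M → Commute (η i) (η k) :=
    fun i k hik hk => hcomm i k (by omega) hk (by omega)
  have hsq' : ∀ j ≤ M, chainProd η j * chainProd η j = ((-1 : ℂ) ^ (j + 1)) • 1 := fun j hj => by
    rw [chainProd_mul_self η hanti' hcomm' hsq0 hsq hj, ← neg_one_smul ℂ (1 : A), smul_pow, one_pow]
  have hφφ : ∀ j k, φ j * φ k =
      (jordanWignerCoeff j * jordanWignerCoeff k) • (chainProd η j * chainProd η k) :=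
    fun j k => by rw [hφ, hφ, smul_mul_smul_comm]; rfl
  have hanticomm : ∀ j k, j < k → k ≤ M → φ j * φ k + φ k * φ j = 0 := fun j k hjk hk => by
    rw [hφφ, hφφ, chainProd_mul_chainProd_of_lt η hanti' hcomm' hjk hk,
      mul_comm (jordanWignerCoeff k), smul_neg, neg_add_cancel]
  refine ⟨fun j k hj hk => ?_, fun j hj => ?_⟩
  · rcases lt_trichotomy j k with hjk | rfl | hjk
    · rw [if_neg hjk.ne, hanticomm j k hjk (by omega)]
    · rw [if_pos rfl, hφφ, hsq' j (by omega), smul_smul, ← two_smul ℂ, smul_smul,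
        jordanWignerCoeff_mul_self]
      norm_num
    · rw [if_neg hjk.ne', add_comm, hanticomm k j hjk (by omega)]
  · rw [hφφ, chainProd_succ, ← mul_assoc, hsq' j (by omega), smul_mul_assoc, one_mul, smul_smul,
      smul_smul, ← mul_assoc, neg_two_I_mul_jordanWignerCoeff_mul_succ, one_smul]

/-- the algebraic generalization of the Jordan–Wigner
transformation, eq. (2) of the paper.  Given `η_0, η_1, …, η_M` with
`η_j η_{j+1} = −η_{j+1} η_j`, `η_j η_k = η_k η_j` for `k − j > 1`, `η_j² = 1`
for `1 ≤ j ≤ M` and `η_0² = −1`, the elements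
`φ_j = (1/√2) exp(iπ(j−1)/2) η_0 η_1 ⋯ η_j` (for `0 ≤ j ≤ M−1`) satisfy the
canonical anticommutation relations `φ_j φ_k + φ_k φ_j = δ_{jk}·1`, and
`(−2i) φ_j φ_{j+1} = η_{j+1}` for `0 ≤ j ≤ M−2`. -/
theorem jordan_wigner_generalization
    (M : ℕ) (hM : 2 ≤ M) (A : Type*) [Ring A] [Algebra ℂ A]
    (η : ℕ → A)
    (hanti : ∀ j : ℕ, j ≤ M - 1 → η j * η (j + 1) = -(η (j + 1) * η j))
    (hcomm : ∀ j k : ℕ, j < k → k ≤ M → 1 < k - j → η j * η k = η k * η j)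
    (hsq : ∀ j : ℕ, 1 ≤ j → j ≤ M → η j ^ 2 = 1)
    (hsq0 : η 0 ^ 2 = -1)
    (φ : ℕ → A)
    (hφ : ∀ j : ℕ, φ j = (((Real.sqrt 2 : ℂ))⁻¹ *
      Complex.exp (Complex.I * (Real.pi : ℂ) * ((j : ℂ) - 1) / 2)) •
      ((List.range (j + 1)).map η).prod) :
    (∀ j k : ℕ, j ≤ M - 1 → k ≤ M - 1 →
      φ j * φ k + φ k * φ j = if j = k then (1 : A) else 0) ∧
    (∀ j : ℕ, j ≤ M - 2 → (-2 * Complex.I) • (φ j * φ (j + 1)) = η (j + 1)) :=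
  jordan_wigner_generalization_general M A η hanti hcomm hsq hsq0 φ hφ
end

section
/- Let n ≥ 2 be even with k = n/2 odd, let N ≥ 2, set ω = exp(2πi/n), and let η_1, …, η_{2N} be elements of an associative unital ℂ-algebra, indexed cyclically mod 2N, satisfying η_j η_{j+1} = ω η_{j+1} η_j for all j, η_j η_k = η_k η_j whenever k ≢ j±1 (mod 2N), and η_j^n = 1 for all j. Define e_j = (1/2) η_j^k. Then the e_j satisfy the Uglov–Ivanov condition: [e_i, [e_i, e_j]] = e_j whenever j ≡ i±1 (mod 2N), and [e_i, e_j] = 0 whenever j ≢ i±1 (mod 2N) and j ≠ i. -/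
/-! Since `ω` is a primitive `2k`-th root of unity, `ω ^ k = -1`, and as `k` is odd also
`ω ^ (k * k) = -1`. Taking `k`-th powers of both factors in `η_j η_{j+1} = ω η_{j+1} η_j` gives
`η_j^k η_{j+1}^k = ω^(k k) η_{j+1}^k η_j^k`, so neighbouring `e`'s anticommute, while
`e_j² = η_j^n / 4 = 1 / 4`. For anticommuting `a, b` the double commutator `⁅a, ⁅a, b⁆⁆` is
`4 a² b`, which here is `b`. Non-neighbouring `η`'s commute, hence so do their powers. -/

theorem IsPrimitiveRoot.pow_eq_neg_one_of_two_mul {R : Type*} [CommRing R] [NoZeroDivisors R]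
    {ζ : R} {k : ℕ} (h : IsPrimitiveRoot ζ (2 * k)) (hk : k ≠ 0) : ζ ^ k = -1 := by
  have h2 := h.pow_of_dvd hk (dvd_mul_left k 2)
  rw [Nat.mul_div_cancel _ (Nat.pos_of_ne_zero hk)] at h2
  exact h2.eq_neg_one_of_two_right

section QCommute

variable {R A : Type*} [CommSemiring R] [Semiring A] [Algebra R A] {a b : A} {q : R}

theorem mul_pow_eq_smul_of_mul_eq_smul_s16 (h : a * b = q • (b * a)) (l : ℕ) :
    a * b ^ l = q ^ l • (b ^ l * a) := by
  induction l with
  | zero => simp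
  | succ l ih =>
    rw [pow_succ, ← mul_assoc, ih, smul_mul_assoc, mul_assoc, h, mul_smul_comm,
      ← mul_assoc, ← pow_succ, smul_smul, ← pow_succ]

theorem pow_mul_pow_eq_smul_of_mul_eq_smul_s16 (h : a * b = q • (b * a)) (m l : ℕ) :
    a ^ m * b ^ l = q ^ (m * l) • (b ^ l * a ^ m) := by
  induction m with
  | zero => simp
  | succ m ih =>
    rw [pow_succ, mul_assoc, mul_pow_eq_smul_of_mul_eq_smul_s16 h l, mul_smul_comm, ← mul_assoc, ih,
      smul_mul_assoc, smul_smul, mul_assoc, ← pow_succ, ← pow_add, add_one_mul, add_comm (m * l)]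

end QCommute

theorem lie_lie_eq_of_mul_eq_neg {A : Type*} [Ring A] {a b : A} (h : a * b = -(b * a)) :
    ⁅a, ⁅a, b⁆⁆ = 4 • (a * a * b) := by
  have hba : b * a = -(a * b) := by rw [h, neg_neg]
  have hab_a : a * b * a = -(a * a * b) := by rw [mul_assoc, hba, mul_neg, mul_assoc]
  simp only [Ring.lie_def, mul_sub, sub_mul, hba, mul_neg, neg_mul, ← mul_assoc, hab_a]
  noncomm_ring

theorem uglov_ivanov_condition_of_clock_relations_general
    (n k : ℕ) (hk : n = 2 * k) (hkodd : Odd k)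
    (N : ℕ) (A : Type*) [Ring A] [Algebra ℂ A]
    (ω : ℂ) (hω : ω = Complex.exp (2 * Real.pi * Complex.I / n))
    (η : ZMod (2 * N) → A)
    (hanti : ∀ j : ZMod (2 * N), η j * η (j + 1) = ω • (η (j + 1) * η j))
    (hcomm : ∀ j l : ZMod (2 * N), l ≠ j + 1 → l ≠ j - 1 → η j * η l = η l * η j)
    (hpow : ∀ j : ZMod (2 * N), η j ^ n = 1)
    (e : ZMod (2 * N) → A)
    (he : ∀ j : ZMod (2 * N), e j = (2 : ℂ)⁻¹ • η j ^ k) :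
    (∀ i j : ZMod (2 * N), (j = i + 1 ∨ j = i - 1) → ⁅e i, ⁅e i, e j⁆⁆ = e j) ∧
    (∀ i j : ZMod (2 * N), j ≠ i + 1 → j ≠ i - 1 → j ≠ i → ⁅e i, e j⁆ = 0) := by
  subst hk
  have hk0 : k ≠ 0 := hkodd.pos.ne'
  have hωk : ω ^ k = -1 := hω ▸
    (Complex.isPrimitiveRoot_exp _ (mul_ne_zero two_ne_zero hk0)).pow_eq_neg_one_of_two_mul hk0
  have he_sq (i : ZMod (2 * N)) : e i * e i = (4 : ℂ)⁻¹ • 1 := by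
    rw [he, smul_mul_smul_comm, ← pow_add, ← two_mul, hpow]
    norm_num
  have he_anti (j : ZMod (2 * N)) : e j * e (j + 1) = -(e (j + 1) * e j) := by
    rw [he, he, smul_mul_smul_comm, smul_mul_smul_comm,
      pow_mul_pow_eq_smul_of_mul_eq_smul_s16 (hanti j), pow_mul, hωk, hkodd.neg_one_pow, neg_one_smul, smul_neg]
  refine ⟨fun i j hj => ?_, fun i j h1 h2 _ => ?_⟩
  · have hij : e i * e j = -(e j * e i) := by
      rcases hj with rfl | rfl
      · exact he_anti i
      · have h := he_anti (i - 1)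
        rw [sub_add_cancel] at h
        rw [h, neg_neg]
    rw [lie_lie_eq_of_mul_eq_neg hij, he_sq, smul_mul_assoc, one_mul]
    module
  · simp only [he]
    exact ((Commute.pow_pow (hcomm i j h1 h2) k k).smul_left _ |>.smul_right _).lie_eq

/-- the Uglov–Ivanov condition for `e_j = (1/2) η_j^k`.
Let `n ≥ 2` be even with `k = n/2` odd, `ω = exp(2πi/n)`, and let `η_j`
(indexed cyclically mod `2N`, `N ≥ 2`) satisfy `η_j η_{j+1} = ω η_{j+1} η_j`,
`η_j η_k = η_k η_j` for `k ≢ j ± 1 (mod 2N)`, and `η_j^n = 1`.  Then the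
elements `e_j = (1/2) η_j^k` satisfy `[e_i, [e_i, e_j]] = e_j` whenever
`j ≡ i ± 1 (mod 2N)`, and `[e_i, e_j] = 0` whenever `j ≢ i ± 1 (mod 2N)`
and `j ≠ i`. -/
theorem uglov_ivanov_condition_of_clock_relations
    (n k : ℕ) (hn : 2 ≤ n) (hk : n = 2 * k) (hkodd : Odd k)
    (N : ℕ) (hN : 2 ≤ N) (A : Type*) [Ring A] [Algebra ℂ A]
    (ω : ℂ) (hω : ω = Complex.exp (2 * Real.pi * Complex.I / n))
    (η : ZMod (2 * N) → A)
    (hanti : ∀ j : ZMod (2 * N), η j * η (j + 1) = ω • (η (j + 1) * η j))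
    (hcomm : ∀ j l : ZMod (2 * N), l ≠ j + 1 → l ≠ j - 1 → η j * η l = η l * η j)
    (hpow : ∀ j : ZMod (2 * N), η j ^ n = 1)
    (e : ZMod (2 * N) → A)
    (he : ∀ j : ZMod (2 * N), e j = (2 : ℂ)⁻¹ • η j ^ k) :
    (∀ i j : ZMod (2 * N), (j = i + 1 ∨ j = i - 1) → ⁅e i, ⁅e i, e j⁆⁆ = e j) ∧
    (∀ i j : ZMod (2 * N), j ≠ i + 1 → j ≠ i - 1 → j ≠ i → ⁅e i, e j⁆ = 0) :=
  uglov_ivanov_condition_of_clock_relations_general n k hk hkodd N A ω hω η hanti hcomm hpow e he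
end
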